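/- arXiv:1906.10016 — 4 statements merged into one kernel-verified Lean document; each statement's English description precedes it below -/
import Mathlib

section
/- Let λ > 0, let k be a positive integer, and let f be the solution of the Poisson–Stein equation for the indicator of [k,∞). Then sup_{i∈ℤ≥0} |f(i)| = |f(k)| = (F_λ(k-1)/(k·π_k(λ)))·F̄_λ(k). -/
open MeasureTheory ProbabilityTheory Finset Real

/-- Poisson point probability `π_j(λ) = e^{-λ} λ^j / j!`. -/
noncomputable def poissonPMF (l : ℝ) (j : ℕ) : ℝ := Real.exp (-l) * l ^ j / (Nat.factorial j)

/-- Poisson CDF `F_λ(j) = Σ_{i=0}^{j} π_i(λ)`. -/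
noncomputable def poissonCDF (l : ℝ) (j : ℕ) : ℝ := ∑ i ∈ Finset.range (j + 1), poissonPMF l i

/-- Poisson right tail `F̄_λ(j) = Σ_{i=j}^{∞} π_i(λ)`. -/
noncomputable def poissonTail (l : ℝ) (j : ℕ) : ℝ := ∑' i : ℕ, poissonPMF l (j + i)

/-- `C0(λ,k) = F_λ(k-1)/(k·π_k(λ))`. -/
noncomputable def SteinC0 (l : ℝ) (k : ℕ) : ℝ := poissonCDF l (k - 1) / (k * poissonPMF l k)

/-- `C1(λ,k)`. -/
noncomputable def SteinC1 (l : ℝ) (k : ℕ) : ℝ :=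
  SteinC0 l k * (1 - min (poissonCDF l (k - 2) * l / ((k - 1) * poissonCDF l (k - 1)))
    (poissonTail l (k + 1) * k / (poissonTail l k * l)))

/-- `C2(λ,k)`. -/
noncomputable def SteinC2 (l : ℝ) (k : ℕ) : ℝ :=
  SteinC0 l k * (2 - poissonCDF l (k - 2) * l / ((k - 1) * poissonCDF l (k - 1))
    - poissonTail l (k + 1) * k / (poissonTail l k * l))

/-- `f` solves the Poisson–Stein equation for the indicator of `[k,∞)`, with `f 0 = f 1`. -/
def IsSteinSolution (l : ℝ) (k : ℕ) (f : ℕ → ℝ) : Prop :=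
  f 0 = f 1 ∧ ∀ j : ℕ, l * f (j + 1) - (j : ℝ) * f j =
    (if k ≤ j then (1 : ℝ) else 0) - poissonTail l k

section aux

variable {l : ℝ}

lemma pmf_pos (hl : 0 < l) (j : ℕ) : 0 < _root_.poissonPMF l j := by
  unfold _root_.poissonPMF
  positivity

lemma pmf_succ (j : ℕ) :
    ((j : ℝ) + 1) * _root_.poissonPMF l (j + 1) = l * _root_.poissonPMF l j := by
  unfold _root_.poissonPMF
  rw [Nat.factorial_succ]
  push_cast
  have h1 : (j : ℝ) + 1 ≠ 0 := by positivity
  have h2 : (Nat.factorial j : ℝ) ≠ 0 := by positivity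
  field_simp
  ring

lemma pmf_summable : Summable (_root_.poissonPMF l) := by
  have := (Real.summable_pow_div_factorial l).mul_left (Real.exp (-l))
  refine this.congr fun j => ?_
  simp [_root_.poissonPMF, mul_div_assoc]

lemma pmf_summable_tail (j : ℕ) : Summable (fun i => _root_.poissonPMF l (j + i)) := by
  have := (summable_nat_add_iff (f := _root_.poissonPMF l) j).2 pmf_summable
  exact this.congr fun i => by rw [add_comm]

lemma tail_pos (hl : 0 < l) (j : ℕ) : 0 < poissonTail l j :=
  Summable.tsum_pos (pmf_summable_tail j) (fun i => (pmf_pos hl _).le) 0 (pmf_pos hl _)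

lemma cdf_pos (hl : 0 < l) (j : ℕ) : 0 < poissonCDF l j :=
  Finset.sum_pos (fun i _ => pmf_pos hl i) ⟨0, by simp⟩

lemma tail_succ (j : ℕ) :
    poissonTail l j = _root_.poissonPMF l j + poissonTail l (j + 1) := by
  unfold poissonTail
  rw [Summable.tsum_eq_zero_add (pmf_summable_tail j)]
  rw [Nat.add_zero]
  congr 1
  exact tsum_congr fun i => by rw [show j + (i + 1) = (j + 1) + i from by omega]

lemma pmf_tsum_one : ∑' j, _root_.poissonPMF l j = 1 := by
  unfold _root_.poissonPMF
  rw [tsum_congr (fun j => by rw [mul_div_assoc]), tsum_mul_left]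
  have : ∑' j : ℕ, l ^ j / (Nat.factorial j : ℝ) = Real.exp l := by
    rw [Real.exp_eq_exp_ℝ, NormedSpace.exp_eq_tsum_div]
  rw [this, ← Real.exp_add]
  simp

lemma cdf_add_tail (j : ℕ) : poissonCDF l j + poissonTail l (j + 1) = 1 := by
  have h := Summable.sum_add_tsum_nat_add (f := _root_.poissonPMF l) (j + 1) pmf_summable
  rw [pmf_tsum_one] at h
  unfold poissonCDF poissonTail
  rw [← h]
  congr 1
  exact tsum_congr fun i => by rw [add_comm]

lemma cdf_succ (j : ℕ) :
    poissonCDF l (j + 1) = poissonCDF l j + _root_.poissonPMF l (j + 1) := by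
  unfold poissonCDF
  rw [Finset.sum_range_succ]

/-- Low-range explicit formula. -/
lemma f_low (hl : 0 < l) {k : ℕ} {f : ℕ → ℝ} (hf : IsSteinSolution l k f) :
    ∀ j : ℕ, j + 1 ≤ k → f (j + 1) =
      -(poissonTail l k * poissonCDF l j) / (((j : ℝ) + 1) * _root_.poissonPMF l (j + 1)) := by
  intro j
  induction j with
  | zero =>
    intro _
    have h := hf.2 0
    simp only [Nat.cast_zero, zero_mul, sub_zero] at h
    rw [if_neg (by omega)] at h
    have hp1 : _root_.poissonPMF l (0 + 1) = l * _root_.poissonPMF l 0 := by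
      have := pmf_succ (l := l) 0; push_cast at this; linarith
    have h0 : poissonCDF l 0 = _root_.poissonPMF l 0 := by simp [poissonCDF]
    have hπ0 : _root_.poissonPMF l 0 ≠ 0 := (pmf_pos hl 0).ne'
    have hf1 : f 1 = -poissonTail l k / l := by
      rw [eq_div_iff hl.ne']; linarith
    rw [hf1, hp1, h0]
    push_cast
    field_simp
    ring
  | succ j ih =>
    intro hjk
    have hprev := ih (by omega)
    have h := hf.2 (j + 1)
    rw [if_neg (by omega)] at h
    push_cast at h
    have hπ : _root_.poissonPMF l (j + 1) ≠ 0 := (pmf_pos hl _).ne'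
    have hπ2 : _root_.poissonPMF l (j + 2) ≠ 0 := (pmf_pos hl _).ne'
    have hrec1 : ((j : ℝ) + 1) * _root_.poissonPMF l (j + 1) = l * _root_.poissonPMF l j :=
      pmf_succ j
    have hrec2 : ((j : ℝ) + 2) * _root_.poissonPMF l (j + 2) = l * _root_.poissonPMF l (j + 1) := by
      have := pmf_succ (l := l) (j + 1); push_cast at this
      convert this using 2 <;> push_cast <;> ring
    have hF : poissonCDF l (j + 1) = poissonCDF l j + _root_.poissonPMF l (j + 1) := cdf_succ j
    have hjpos : ((j : ℝ) + 1) * _root_.poissonPMF l (j + 1) ≠ 0 := by positivity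
    have hstep : l * f (j + 1 + 1) = ((j : ℝ) + 1) * f (j + 1) - poissonTail l k := by
      linarith
    have hfj1 : ((j : ℝ) + 1) * f (j + 1) =
        -(poissonTail l k * poissonCDF l j) / _root_.poissonPMF l (j + 1) := by
      rw [hprev]
      field_simp
    have hkey : l * f (j + 1 + 1) =
        -(poissonTail l k * poissonCDF l (j + 1)) / _root_.poissonPMF l (j + 1) := by
      rw [hstep, hfj1, hF]
      field_simp
      ring
    have hgoal : f (j + 1 + 1) = -(poissonTail l k * poissonCDF l (j + 1)) /
        (l * _root_.poissonPMF l (j + 1)) := by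
      rw [eq_div_iff (by positivity)]
      rw [eq_div_iff hπ] at hkey
      linear_combination hkey
    rw [hgoal]
    rw [show ((j + 1 : ℕ) : ℝ) + 1 = (j : ℝ) + 2 from by push_cast; ring]
    rw [show _root_.poissonPMF l (j + 1 + 1) = _root_.poissonPMF l (j + 2) from rfl]
    congr 1
    rw [hrec2]

/-- High-range explicit formula. -/
lemma f_high (hl : 0 < l) {k : ℕ} (hk : 1 ≤ k) {f : ℕ → ℝ} (hf : IsSteinSolution l k f) :
    ∀ m : ℕ, f (k + m) =
      -(poissonCDF l (k - 1) * poissonTail l (k + m)) /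
        (((k : ℝ) + m) * _root_.poissonPMF l (k + m)) := by
  have hFk : (1 : ℝ) - poissonTail l k = poissonCDF l (k - 1) := by
    have := cdf_add_tail (l := l) (k - 1)
    rw [show k - 1 + 1 = k from by omega] at this
    linarith
  have hkR : (1 : ℝ) ≤ (k : ℝ) := by exact_mod_cast hk
  intro m
  induction m with
  | zero =>
    have h := f_low hl hf (k - 1) (by omega)
    rw [show k - 1 + 1 = k from by omega] at h
    rw [show ((k - 1 : ℕ) : ℝ) + 1 = (k : ℝ) from by push_cast [Nat.cast_sub hk]; ring] at h
    simp only [Nat.add_zero, Nat.cast_zero, add_zero]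
    rw [h]
    ring_nf
  | succ m ih =>
    have h := hf.2 (k + m)
    rw [if_pos (by omega)] at h
    have hπ : _root_.poissonPMF l (k + m) ≠ 0 := (pmf_pos hl _).ne'
    have hrec : ((k : ℝ) + m + 1) * _root_.poissonPMF l (k + m + 1) =
        l * _root_.poissonPMF l (k + m) := by
      have := pmf_succ (l := l) (k + m)
      convert this using 2 <;> push_cast <;> ring
    have hT : poissonTail l (k + m) = _root_.poissonPMF l (k + m) + poissonTail l (k + m + 1) :=
      tail_succ (k + m)
    have hstep : l * f (k + m + 1) = ((k : ℝ) + m) * f (k + m) + poissonCDF l (k - 1) := by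
      push_cast at h ⊢
      linarith
    have hkm : ((k : ℝ) + m) ≠ 0 := by
      have : (0 : ℝ) ≤ (m : ℝ) := Nat.cast_nonneg m
      nlinarith
    have hfj : ((k : ℝ) + m) * f (k + m) =
        -(poissonCDF l (k - 1) * poissonTail l (k + m)) / _root_.poissonPMF l (k + m) := by
      rw [ih]
      field_simp
    have hkey : l * f (k + m + 1) = -(poissonCDF l (k - 1) * poissonTail l (k + m + 1)) /
        _root_.poissonPMF l (k + m) := by
      rw [hstep, hfj, hT]
      field_simp
      ring
    have hgoal : f (k + m + 1) = -(poissonCDF l (k - 1) * poissonTail l (k + m + 1)) /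
        (l * _root_.poissonPMF l (k + m)) := by
      rw [eq_div_iff (by positivity)]
      rw [eq_div_iff hπ] at hkey
      linear_combination hkey
    rw [show k + (m + 1) = k + m + 1 from rfl, hgoal, ← hrec]
    push_cast
    ring_nf

/-- `l · F j ≤ (j+1) · F (j+1)`. -/
lemma lF_le (hl : 0 < l) (j : ℕ) :
    l * poissonCDF l j ≤ ((j : ℝ) + 1) * poissonCDF l (j + 1) := by
  have h1 : l * poissonCDF l j =
      ∑ i ∈ Finset.range (j + 1), ((i : ℝ) + 1) * _root_.poissonPMF l (i + 1) := by
    unfold poissonCDF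
    rw [Finset.mul_sum]
    exact Finset.sum_congr rfl fun i _ => (pmf_succ i).symm
  have h2 : ∑ i ∈ Finset.range (j + 1), ((i : ℝ) + 1) * _root_.poissonPMF l (i + 1) ≤
      ∑ i ∈ Finset.range (j + 1), ((j : ℝ) + 1) * _root_.poissonPMF l (i + 1) := by
    apply Finset.sum_le_sum
    intro i hi
    have hij : i < j + 1 := Finset.mem_range.1 hi
    have : (i : ℝ) ≤ j := by exact_mod_cast Nat.lt_succ_iff.1 hij
    exact mul_le_mul_of_nonneg_right (by linarith) (pmf_pos hl _).le
  have h3 : ∑ i ∈ Finset.range (j + 1), ((j : ℝ) + 1) * _root_.poissonPMF l (i + 1) ≤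
      ((j : ℝ) + 1) * poissonCDF l (j + 1) := by
    rw [← Finset.mul_sum]
    apply mul_le_mul_of_nonneg_left _ (by positivity)
    unfold poissonCDF
    rw [Finset.sum_range_succ' (fun i => _root_.poissonPMF l i) (j + 1)]
    nlinarith [pmf_pos hl 0]
  linarith

/-- `j · T (j+1) ≤ l · T j`. -/
lemma jT_le (hl : 0 < l) (j : ℕ) :
    (j : ℝ) * poissonTail l (j + 1) ≤ l * poissonTail l j := by
  have h1 : l * poissonTail l j =
      ∑' i : ℕ, ((j : ℝ) + i + 1) * _root_.poissonPMF l (j + 1 + i) := by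
    unfold poissonTail
    rw [← tsum_mul_left]
    apply tsum_congr
    intro i
    have := pmf_succ (l := l) (j + i)
    push_cast at this
    rw [show j + 1 + i = j + i + 1 from by omega]
    linarith
  have h2 : (j : ℝ) * poissonTail l (j + 1) =
      ∑' i : ℕ, (j : ℝ) * _root_.poissonPMF l (j + 1 + i) := by
    unfold poissonTail; rw [tsum_mul_left]
  rw [h1, h2]
  apply Summable.tsum_le_tsum
  · intro i
    apply mul_le_mul_of_nonneg_right _ (pmf_pos hl _).le
    have : (0 : ℝ) ≤ (i : ℝ) := Nat.cast_nonneg i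
    linarith
  · exact (pmf_summable_tail (j + 1)).mul_left _
  · refine (Summable.congr ((pmf_summable_tail (l := l) j).mul_left l) fun i => ?_)
    have := pmf_succ (l := l) (j + i)
    push_cast at this
    rw [show j + 1 + i = j + i + 1 from by omega]
    linarith

/-- monotone low ratio `F j / ((j+1) π_{j+1})`. -/
lemma low_ratio_mono (hl : 0 < l) :
    Monotone (fun j : ℕ => poissonCDF l j / (((j : ℝ) + 1) * _root_.poissonPMF l (j + 1))) := by
  apply monotone_nat_of_le_succ
  intro j
  have hrec : ((j : ℝ) + 2) * _root_.poissonPMF l (j + 2) = l * _root_.poissonPMF l (j + 1) := by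
    have := pmf_succ (l := l) (j + 1)
    convert this using 2 <;> push_cast <;> ring
  have hπ : 0 < _root_.poissonPMF l (j + 1) := pmf_pos hl _
  have h1 : (0 : ℝ) < ((j : ℝ) + 1) * _root_.poissonPMF l (j + 1) := by positivity
  have h2 : (0 : ℝ) < l * _root_.poissonPMF l (j + 1) := by positivity
  show poissonCDF l j / _ ≤ poissonCDF l (j + 1) / _
  rw [show ((j + 1 : ℕ) : ℝ) + 1 = (j : ℝ) + 2 from by push_cast; ring]
  rw [show _root_.poissonPMF l (j + 1 + 1) = _root_.poissonPMF l (j + 2) from rfl, hrec]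
  rw [div_le_div_iff₀ h1 h2]
  have := lF_le hl j
  nlinarith [cdf_pos hl j, cdf_pos hl (j + 1)]

/-- the high ratio `T j / (j π_j)` decreases. -/
lemma high_ratio_anti (hl : 0 < l) (j : ℕ) (hj : 1 ≤ j) :
    poissonTail l (j + 1) / (((j : ℝ) + 1) * _root_.poissonPMF l (j + 1)) ≤
    poissonTail l j / ((j : ℝ) * _root_.poissonPMF l j) := by
  have hrec : ((j : ℝ) + 1) * _root_.poissonPMF l (j + 1) = l * _root_.poissonPMF l j :=
    pmf_succ j
  have hπ : 0 < _root_.poissonPMF l j := pmf_pos hl _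
  have hj2 : (1 : ℝ) ≤ (j : ℝ) := by exact_mod_cast hj
  have h1 : (0 : ℝ) < l * _root_.poissonPMF l j := by positivity
  have h2 : (0 : ℝ) < (j : ℝ) * _root_.poissonPMF l j := by nlinarith
  rw [hrec, div_le_div_iff₀ h1 h2]
  have := jT_le hl j
  nlinarith [tail_pos hl j, tail_pos hl (j + 1)]

end aux

/-- Lemma 2 (i): the sup of `|f(i)|` is attained at `k` and equals `C0(l,k) * F̄_l(k)`. -/
theorem stein_sup_f (l : ℝ) (hl : 0 < l) (k : ℕ) (hk : 1 ≤ k) (f : ℕ → ℝ)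
    (hf : IsSteinSolution l k f) :
    (∀ i : ℕ, |f i| ≤ |f k|) ∧ |f k| = SteinC0 l k * poissonTail l k := by
  have hkR : (0 : ℝ) < (k : ℝ) := by exact_mod_cast hk
  have hfk : f k = -(poissonTail l k * poissonCDF l (k - 1)) /
      ((k : ℝ) * _root_.poissonPMF l k) := by
    have h := f_low hl hf (k - 1) (by omega)
    rw [show k - 1 + 1 = k from by omega] at h
    rw [show ((k - 1 : ℕ) : ℝ) + 1 = (k : ℝ) from by push_cast [Nat.cast_sub hk]; ring] at h
    exact h
  have hπk : 0 < _root_.poissonPMF l k := pmf_pos hl k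
  have habsk : |f k| =
      poissonTail l k * poissonCDF l (k - 1) / ((k : ℝ) * _root_.poissonPMF l k) := by
    rw [hfk, neg_div, abs_neg, abs_of_nonneg]
    have := tail_pos hl k
    have := cdf_pos hl (k - 1)
    positivity
  have hT : 0 < poissonTail l k := tail_pos hl k
  have hF : 0 < poissonCDF l (k - 1) := cdf_pos hl (k - 1)
  have hmono : ∀ m : ℕ, m ≤ k - 1 →
      poissonCDF l m / (((m : ℝ) + 1) * _root_.poissonPMF l (m + 1)) ≤
      poissonCDF l (k - 1) / ((k : ℝ) * _root_.poissonPMF l k) := by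
    intro m hm
    have h := low_ratio_mono hl hm
    dsimp only at h
    rw [show k - 1 + 1 = k from by omega] at h
    rw [show ((k - 1 : ℕ) : ℝ) + 1 = (k : ℝ) from by push_cast [Nat.cast_sub hk]; ring] at h
    exact h
  constructor
  · intro i
    rcases Nat.lt_or_ge i k with hik | hik
    · -- i < k : reduce to explicit formula; i = 0 via f 0 = f 1
      have key : ∀ m : ℕ, m + 1 ≤ k → |f (m + 1)| ≤ |f k| := by
        intro m hm
        have h1 := f_low hl hf m hm
        rw [h1, habsk, neg_div, abs_neg, abs_of_nonneg (by
          have := cdf_pos hl m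
          have hπ := pmf_pos hl (m + 1)
          positivity)]
        calc poissonTail l k * poissonCDF l m / (((m : ℝ) + 1) * _root_.poissonPMF l (m + 1))
            = poissonTail l k *
              (poissonCDF l m / (((m : ℝ) + 1) * _root_.poissonPMF l (m + 1))) := by
              rw [mul_div_assoc]
          _ ≤ poissonTail l k *
              (poissonCDF l (k - 1) / ((k : ℝ) * _root_.poissonPMF l k)) :=
              mul_le_mul_of_nonneg_left (hmono m (by omega)) hT.le
          _ = poissonTail l k * poissonCDF l (k - 1) / ((k : ℝ) * _root_.poissonPMF l k) := by
              rw [mul_div_assoc]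
      rcases Nat.eq_zero_or_pos i with rfl | hi
      · rw [hf.1]
        exact key 0 (by omega)
      · obtain ⟨m, rfl⟩ : ∃ m, i = m + 1 := ⟨i - 1, by omega⟩
        exact key m (by omega)
    · -- i ≥ k
      obtain ⟨m, rfl⟩ : ∃ m, i = k + m := ⟨i - k, by omega⟩
      have h1 := f_high hl hk hf m
      rw [h1, habsk, neg_div, abs_neg, abs_of_nonneg (by
        have := tail_pos hl (k + m)
        have hπ := pmf_pos hl (k + m)
        have hkm : (0 : ℝ) < (k : ℝ) + m := by
          have : (0 : ℝ) ≤ (m : ℝ) := Nat.cast_nonneg m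
          linarith
        positivity)]
      have hchain : ∀ m : ℕ,
          poissonTail l (k + m) / (((k : ℝ) + m) * _root_.poissonPMF l (k + m)) ≤
          poissonTail l k / ((k : ℝ) * _root_.poissonPMF l k) := by
        intro m
        induction m with
        | zero => simp
        | succ m ih =>
          have hstep := high_ratio_anti hl (k + m) (by omega)
          have heq1 : ((k + m : ℕ) : ℝ) + 1 = (k : ℝ) + ((m : ℝ) + 1) := by push_cast; ring
          have heq2 : ((k + m : ℕ) : ℝ) = (k : ℝ) + (m : ℝ) := by push_cast; ring
          rw [heq1, heq2] at hstep
          refine le_trans (le_of_eq ?_) (le_trans hstep ih)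
          rw [show k + (m + 1) = k + m + 1 from rfl]
          rw [show ((k : ℝ) + ((m + 1 : ℕ) : ℝ)) = (k : ℝ) + ((m : ℝ) + 1) from by push_cast; ring]
      calc poissonCDF l (k - 1) * poissonTail l (k + m) /
            (((k : ℝ) + m) * _root_.poissonPMF l (k + m))
          = poissonCDF l (k - 1) *
            (poissonTail l (k + m) / (((k : ℝ) + m) * _root_.poissonPMF l (k + m))) := by
            rw [mul_div_assoc]
        _ ≤ poissonCDF l (k - 1) *
            (poissonTail l k / ((k : ℝ) * _root_.poissonPMF l k)) :=
            mul_le_mul_of_nonneg_left (hchain m) hF.le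
        _ = poissonTail l k * poissonCDF l (k - 1) / ((k : ℝ) * _root_.poissonPMF l k) := by
            rw [mul_div_assoc]; ring
  · rw [habsk, SteinC0]
    field_simp
end

section
/- Let λ > 0, let k be a positive integer, and let f be the solution of the Poisson–Stein equation for the indicator of [k,∞). Then Δf(i) ≤ 0 for all integers 0 ≤ i ≤ k−1 and Δf(i) ≥ 0 for all integers i ≥ k; moreover Δ²f(i) ≤ 0 for every i ∈ ℤ≥0 with i ≠ k−1, so that Δf is nonincreasing on {0,1,…,k−1} and nonincreasing on {k, k+1, …}. -/
open MeasureTheory ProbabilityTheory Finset Real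

namespace SteinAux

variable {l : ℝ}

lemma pp_pos (hl : 0 < l) (j : ℕ) : 0 < _root_.poissonPMF l j := by
  simp only [_root_.poissonPMF]
  have : (0:ℝ) < (Nat.factorial j : ℝ) := by exact_mod_cast Nat.factorial_pos j
  positivity

lemma pp_nonneg (hl : 0 < l) (j : ℕ) : 0 ≤ _root_.poissonPMF l j := (pp_pos hl j).le

lemma summable_shift (hl : 0 < l) (j : ℕ) : Summable (fun t : ℕ => _root_.poissonPMF l (j + t)) := by
  refine Summable.of_nonneg_of_le (fun t => pp_nonneg hl _) (fun t => ?_)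
    ((Real.summable_pow_div_factorial l).mul_left (Real.exp (-l) * l ^ j))
  simp only [_root_.poissonPMF]
  have h1 : (0:ℝ) < (Nat.factorial t : ℝ) := by exact_mod_cast Nat.factorial_pos t
  have h2 : ((Nat.factorial t : ℝ)) ≤ (Nat.factorial (j + t) : ℝ) := by
    exact_mod_cast Nat.factorial_le (Nat.le_add_left t j)
  calc Real.exp (-l) * l ^ (j + t) / (Nat.factorial (j+t) : ℝ)
      ≤ Real.exp (-l) * l ^ (j + t) / (Nat.factorial t : ℝ) := by
        gcongr
    _ = Real.exp (-l) * l ^ j * (l ^ t / (Nat.factorial t : ℝ)) := by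
        rw [pow_add]; ring

lemma hasSum_pp (hl : 0 < l) : HasSum (_root_.poissonPMF l) 1 := by
  have h := ProbabilityTheory.poissonPMFRealSum l.toNNReal
  have he : (fun n => ProbabilityTheory.poissonPMFReal l.toNNReal n) = _root_.poissonPMF l := by
    funext n
    simp [ProbabilityTheory.poissonPMFReal, _root_.poissonPMF, Real.coe_toNNReal l hl.le]
  rw [← he]; exact h

lemma sum_split (hl : 0 < l) {k : ℕ} (hk : 1 ≤ k) :
    poissonCDF l (k - 1) + poissonTail l k = 1 := by
  have hs : Summable (_root_.poissonPMF l) := (hasSum_pp hl).summable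
  have h := Summable.sum_add_tsum_nat_add (f := _root_.poissonPMF l) k hs
  rw [(hasSum_pp hl).tsum_eq] at h
  have h1 : poissonCDF l (k - 1) = ∑ i ∈ Finset.range k, _root_.poissonPMF l i := by
    rw [poissonCDF, Nat.sub_add_cancel hk]
  have h2 : poissonTail l k = ∑' i : ℕ, _root_.poissonPMF l (i + k) := by
    rw [poissonTail]; exact tsum_congr fun i => by rw [Nat.add_comm]
  rw [h1, h2, h]




noncomputable def sa (l : ℝ) (j : ℕ) : ℝ :=
  ∑ d ∈ Finset.range (j + 1), (j.descFactorial d : ℝ) / l ^ d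

noncomputable def sda (l : ℝ) (j : ℕ) : ℝ :=
  ∑ t ∈ Finset.range (j + 1), ((t + 1) * j.descFactorial t : ℝ) / l ^ (t + 1)

lemma sa_zero : sa l 0 = 1 := by simp [sa]

lemma desc_id (j t : ℕ) : (j+1).descFactorial (t+1)
    = j.descFactorial (t+1) + (t+1) * j.descFactorial t := by
  rw [Nat.succ_descFactorial_succ, Nat.descFactorial_succ]
  rcases le_or_gt t j with h | h
  · have hj : j + 1 = (j - t) + (t + 1) := by omega
    rw [hj, add_mul]
  · rw [Nat.descFactorial_eq_zero_iff_lt.mpr h]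
    simp

lemma cdf_eq (hl : 0 < l) (j : ℕ) : poissonCDF l j = poissonPMF l j * sa l j := by
  rw [sa, Finset.mul_sum, poissonCDF,
    ← Finset.sum_range_reflect (fun i => poissonPMF l i) (j + 1)]
  apply Finset.sum_congr rfl
  intro d hd
  have hdj : d ≤ j := Nat.lt_succ_iff.mp (Finset.mem_range.mp hd)
  have hidx : j + 1 - 1 - d = j - d := by omega
  rw [hidx]
  have hfac : ((j - d).factorial : ℝ) * (j.descFactorial d : ℝ) = (j.factorial : ℝ) := by
    exact_mod_cast congrArg (Nat.cast (R := ℝ)) (Nat.factorial_mul_descFactorial hdj)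
  have hpow : l ^ (j - d) * l ^ d = l ^ j := pow_sub_mul_pow l hdj
  simp only [_root_.poissonPMF]
  have h1 : ((j - d).factorial : ℝ) ≠ 0 := by
    have := Nat.factorial_pos (j - d); positivity
  have h2 : ((j).factorial : ℝ) ≠ 0 := by
    have := Nat.factorial_pos j; positivity
  have h3 : l ^ d ≠ 0 := by positivity
  field_simp
  ring_nf
  rw [hpow, ← hfac]
  ring

lemma sa_succ (hl : 0 < l) (j : ℕ) : sa l (j + 1) = 1 + ((j + 1) / l) * sa l j := by
  have hterm : ∀ t, (((j+1).descFactorial (t+1) : ℕ) : ℝ) / l ^ (t+1)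
      = ((j+1 : ℕ) : ℝ)/l * ((j.descFactorial t : ℝ) / l ^ t) := by
    intro t
    rw [Nat.succ_descFactorial_succ, pow_succ]
    push_cast
    ring
  rw [sa, Finset.sum_range_succ' (fun d => ((j+1).descFactorial d : ℝ) / l ^ d) (j + 1),
    Finset.sum_congr rfl (fun t _ => hterm t), ← Finset.mul_sum, ← sa]
  push_cast
  norm_num [Nat.descFactorial_zero]
  ring

lemma sa_diff (hl : 0 < l) (j : ℕ) : sa l (j + 1) = sa l j + sda l j := by
  rw [sa, Finset.sum_range_succ' (fun d => ((j+1).descFactorial d : ℝ) / l ^ d) (j + 1)]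
  have hterm : ∀ t, (((j+1).descFactorial (t+1) : ℕ) : ℝ) / l ^ (t+1)
      = (j.descFactorial (t+1) : ℝ) / l ^ (t+1) + ((t+1) * j.descFactorial t : ℝ) / l ^ (t+1) := by
    intro t
    rw [desc_id]
    push_cast
    rw [add_div]
  rw [Finset.sum_congr rfl (fun t _ => hterm t), Finset.sum_add_distrib]
  have h2 : sa l j = (∑ t ∈ Finset.range (j + 1), (j.descFactorial (t+1) : ℝ) / l ^ (t+1))
      + ((j.descFactorial 0 : ℝ) / l ^ 0) := by
    rw [sa, Finset.sum_range_succ' (fun d => ((j).descFactorial d : ℝ) / l ^ d) j]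
    rw [Finset.sum_range_succ]
    rw [Nat.descFactorial_eq_zero_iff_lt.mpr (Nat.lt_succ_self j)]
    norm_num
  rw [h2, sda]
  simp only [Nat.descFactorial_zero, Nat.cast_one, pow_zero]
  push_cast
  ring

lemma sda_nonneg (hl : 0 < l) (j : ℕ) : 0 ≤ sda l j := by
  apply Finset.sum_nonneg
  intro t _
  positivity

lemma sda_mono (hl : 0 < l) (j : ℕ) : sda l j ≤ sda l (j + 1) := by
  have h1 : sda l j
      ≤ ∑ t ∈ Finset.range (j + 1), ((t + 1) * (j+1).descFactorial t : ℝ) / l ^ (t + 1) := by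
    rw [sda]
    apply Finset.sum_le_sum
    intro t _
    have : (j.descFactorial t : ℝ) ≤ ((j+1).descFactorial t : ℝ) := by
      exact_mod_cast Nat.descFactorial_le t (Nat.le_succ j)
    gcongr
  refine h1.trans ?_
  rw [sda]
  conv_rhs => rw [Finset.sum_range_succ]
  apply le_add_of_nonneg_right
  positivity




noncomputable def sc (l : ℝ) (j t : ℕ) : ℝ :=
  l ^ (t + 1) * ((j.factorial : ℝ) / ((j + t + 1).factorial : ℝ))

noncomputable def sb (l : ℝ) (j : ℕ) : ℝ := ∑' t : ℕ, sc l j t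

lemma sc_nonneg (hl : 0 < l) (j t : ℕ) : 0 ≤ sc l j t := by
  rw [sc]; positivity

lemma summable_sc (hl : 0 < l) (j : ℕ) : Summable (sc l j) := by
  refine Summable.of_nonneg_of_le (sc_nonneg hl j) (fun t => ?_)
    (((Real.summable_pow_div_factorial l).mul_left (l * (j.factorial : ℝ))))
  rw [sc]
  have h1 : (0:ℝ) < (Nat.factorial t : ℝ) := by exact_mod_cast Nat.factorial_pos t
  have h2 : ((Nat.factorial t : ℝ)) ≤ (Nat.factorial (j + t + 1) : ℝ) := by
    exact_mod_cast Nat.factorial_le (by omega)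
  calc l ^ (t+1) * ((j.factorial : ℝ) / ((j + t + 1).factorial : ℝ))
      ≤ l ^ (t+1) * ((j.factorial : ℝ) / (t.factorial : ℝ)) := by
        gcongr
    _ = l * (j.factorial : ℝ) * (l ^ t / (t.factorial : ℝ)) := by rw [pow_succ]; ring

lemma sb_nonneg (hl : 0 < l) (j : ℕ) : 0 ≤ sb l j := tsum_nonneg (sc_nonneg hl j)

lemma tail_eq (hl : 0 < l) (j : ℕ) : poissonTail l (j + 1) = poissonPMF l j * sb l j := by
  rw [poissonTail, sb, ← tsum_mul_left]
  apply tsum_congr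
  intro t
  simp only [_root_.poissonPMF, sc]
  have hidx : j + 1 + t = j + t + 1 := by omega
  rw [hidx, pow_add]
  have h1 : ((j + t + 1).factorial : ℝ) ≠ 0 := by
    have := Nat.factorial_pos (j + t + 1); positivity
  have h2 : ((j).factorial : ℝ) ≠ 0 := by
    have := Nat.factorial_pos j; positivity
  field_simp
  ring

lemma sb_rec (hl : 0 < l) (j : ℕ) : sb l j = (l / (j + 1)) * (1 + sb l (j + 1)) := by
  rw [sb, Summable.tsum_eq_zero_add (summable_sc hl j)]
  have hzero : sc l j 0 = l / (j + 1) := by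
    rw [sc]
    have : (j + 0 + 1).factorial = (j + 1) * j.factorial := by
      simp [Nat.factorial_succ]
    rw [this]
    have h2 : ((j).factorial : ℝ) ≠ 0 := by
      have := Nat.factorial_pos j; positivity
    push_cast
    field_simp
  have hsucc : ∀ t, sc l j (t + 1) = (l / (j + 1)) * sc l (j + 1) t := by
    intro t
    simp only [sc]
    have hi1 : j + (t + 1) + 1 = j + t + 2 := by omega
    have hi2 : j + 1 + t + 1 = j + t + 2 := by omega
    rw [hi1, hi2]
    have : ((j + 1).factorial : ℝ) = (j + 1) * (j.factorial : ℝ) := by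
      rw [Nat.factorial_succ]; push_cast; ring
    rw [this, pow_succ, pow_succ]
    have h2 : ((j + t + 2).factorial : ℝ) ≠ 0 := by
      have := Nat.factorial_pos (j + t + 2); positivity
    have h3 : (0:ℝ) < (j:ℝ) + 1 := by positivity
    field_simp
  rw [hzero, tsum_congr hsucc, tsum_mul_left, ← sb]
  ring

lemma sb_antitone (hl : 0 < l) (j : ℕ) : sb l (j + 1) ≤ sb l j := by
  refine Summable.tsum_le_tsum (fun t => ?_) (summable_sc hl (j+1)) (summable_sc hl j)
  simp only [sc]
  have hi : j + 1 + t + 1 = j + t + 2 := by omega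
  rw [hi]
  have hf1 : (0:ℝ) < ((j + t + 1).factorial : ℝ) := by exact_mod_cast Nat.factorial_pos _
  have hf2 : (0:ℝ) < ((j + t + 2).factorial : ℝ) := by exact_mod_cast Nat.factorial_pos _
  have key : ((j+1).factorial : ℝ) / ((j + t + 2).factorial : ℝ)
      ≤ (j.factorial : ℝ) / ((j + t + 1).factorial : ℝ) := by
    rw [div_le_div_iff₀ hf2 hf1]
    have e1 : ((j+1).factorial : ℝ) = ((j:ℝ) + 1) * (j.factorial : ℝ) := by
      rw [Nat.factorial_succ]; push_cast; ring
    have e2 : ((j + t + 2).factorial : ℝ) = ((j:ℝ) + (t:ℝ) + 2) * ((j + t + 1).factorial : ℝ) := by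
      have : j + t + 2 = (j + t + 1) + 1 := by omega
      rw [this, Nat.factorial_succ]; push_cast; ring
    rw [e1, e2]
    have hj0 : (0:ℝ) ≤ (j.factorial : ℝ) := by positivity
    nlinarith [mul_nonneg hj0 hf1.le, mul_nonneg (mul_nonneg hj0 hf1.le) (Nat.cast_nonneg (α := ℝ) t)]
  gcongr

lemma sb_convex (hl : 0 < l) (j : ℕ) : 2 * sb l (j + 1) ≤ sb l j + sb l (j + 2) := by
  have hs1 := summable_sc hl j
  have hs2 := summable_sc hl (j+1)
  have hs3 := summable_sc hl (j+2)
  have hadd : sb l j + sb l (j + 2) = ∑' t, (sc l j t + sc l (j+2) t) := by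
    rw [sb, sb, ← Summable.tsum_add hs1 hs3]
  have hmul : 2 * sb l (j + 1) = ∑' t, 2 * sc l (j+1) t := by
    rw [sb, tsum_mul_left]
  rw [hadd, hmul]
  refine Summable.tsum_le_tsum (fun t => ?_) (hs2.mul_left 2) (hs1.add hs3)
  simp only [sc]
  have hi1 : j + 1 + t + 1 = j + t + 2 := by omega
  have hi2 : j + 2 + t + 1 = j + t + 3 := by omega
  rw [hi1, hi2]
  have hf1 : (0:ℝ) < ((j + t + 1).factorial : ℝ) := by exact_mod_cast Nat.factorial_pos _
  have e1 : ((j+1).factorial : ℝ) = ((j:ℝ) + 1) * (j.factorial : ℝ) := by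
    rw [Nat.factorial_succ]; push_cast; ring
  have e12 : ((j+2).factorial : ℝ) = ((j:ℝ) + 2) * ((j:ℝ) + 1) * (j.factorial : ℝ) := by
    have h : j + 2 = (j + 1) + 1 := by omega
    rw [h, Nat.factorial_succ, Nat.factorial_succ]; push_cast; ring
  have e2 : ((j + t + 2).factorial : ℝ) = ((j:ℝ) + (t:ℝ) + 2) * ((j + t + 1).factorial : ℝ) := by
    have h : j + t + 2 = (j + t + 1) + 1 := by omega
    rw [h, Nat.factorial_succ]; push_cast; ring
  have e3 : ((j + t + 3).factorial : ℝ)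
      = ((j:ℝ) + (t:ℝ) + 3) * ((j:ℝ) + (t:ℝ) + 2) * ((j + t + 1).factorial : ℝ) := by
    have h : j + t + 3 = ((j + t + 1) + 1) + 1 := by omega
    rw [h, Nat.factorial_succ, Nat.factorial_succ]; push_cast; ring
  rw [e1, e12, e2, e3]
  have hj0 : (0:ℝ) < (j.factorial : ℝ) := by exact_mod_cast Nat.factorial_pos _
  have hl1 : (0:ℝ) ≤ l ^ (t+1) := by positivity
  have ht0 : (0:ℝ) ≤ (t:ℝ) := Nat.cast_nonneg t
  have hj1 : (0:ℝ) ≤ (j:ℝ) := Nat.cast_nonneg j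
  set F := ((j + t + 1).factorial : ℝ) with hF
  set P := ((j).factorial : ℝ) with hP
  have key : 2 * (((j:ℝ)+1) * P / (((j:ℝ)+(t:ℝ)+2) * F))
      ≤ P / F + ((j:ℝ)+2) * ((j:ℝ)+1) * P / (((j:ℝ)+(t:ℝ)+3) * ((j:ℝ)+(t:ℝ)+2) * F) := by
    have expand : P / F + ((j:ℝ)+2) * ((j:ℝ)+1) * P / (((j:ℝ)+(t:ℝ)+3) * ((j:ℝ)+(t:ℝ)+2) * F)
        - 2 * (((j:ℝ)+1) * P / (((j:ℝ)+(t:ℝ)+2) * F))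
        = (((t:ℝ)+1) * ((t:ℝ)+2)) * (P / ((((j:ℝ)+(t:ℝ)+3) * (((j:ℝ)+(t:ℝ)+2))) * F)) := by
      have d1 : ((j:ℝ)+(t:ℝ)+2) ≠ 0 := by positivity
      have d2 : ((j:ℝ)+(t:ℝ)+3) ≠ 0 := by positivity
      have d3 : F ≠ 0 := by positivity
      field_simp
      ring
    have pos : (0:ℝ) ≤ (((t:ℝ)+1) * ((t:ℝ)+2)) * (P / ((((j:ℝ)+(t:ℝ)+3) * (((j:ℝ)+(t:ℝ)+2))) * F)) := by
      positivity
    linarith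
  nlinarith [mul_le_mul_of_nonneg_left key hl1]



lemma overlap (hl : 0 < l) {k : ℕ} (hk : 1 ≤ k) :
    poissonTail l k * sa l (k - 1) = poissonCDF l (k - 1) * sb l (k - 1) := by
  have h2 : poissonTail l k = _root_.poissonPMF l (k - 1) * sb l (k - 1) := by
    have := tail_eq hl (k - 1)
    rwa [Nat.sub_add_cancel hk] at this
  rw [cdf_eq hl (k - 1), h2]
  ring

lemma master (hl : 0 < l) {k : ℕ} (hk : 1 ≤ k) {f : ℕ → ℝ} (hf : IsSteinSolution l k f) :
    ∀ j : ℕ, (j < k → f (j + 1) = -(poissonTail l k / l) * sa l j)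
      ∧ (k ≤ j + 1 → f (j + 1) = -(poissonCDF l (k - 1) / l) * sb l j) := by
  have hC : poissonCDF l (k - 1) = 1 - poissonTail l k := by
    have := sum_split hl hk; linarith
  set T := poissonTail l k with hT
  set C := poissonCDF l (k - 1) with hCdef
  have hl0 : l ≠ 0 := ne_of_gt hl
  intro j
  induction j with
  | zero =>
    have h0 := hf.2 0
    rw [if_neg (by omega)] at h0
    push_cast at h0
    have hf1 : f 1 = -(T / l) * sa l 0 := by
      rw [sa_zero]
      field_simp
      linarith
    refine ⟨fun _ => hf1, fun h1 => ?_⟩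
    have hk1 : k - 1 = 0 := by omega
    have hov : T * sa l 0 = C * sb l 0 := by
      have h := overlap hl hk (l := l)
      rw [hk1] at h
      rw [hT, hCdef, hk1]
      exact h
    rw [hf1]
    rw [neg_mul, neg_mul, neg_eq_iff_eq_neg, neg_neg, div_mul_eq_mul_div, div_mul_eq_mul_div, hov]
  | succ j ih =>
    have hleft : j + 1 < k → f (j + 2) = -(T / l) * sa l (j + 1) := by
      intro h
      have hfj := ih.1 (by omega)
      have hs := hf.2 (j + 1)
      rw [if_neg (by omega), hfj] at hs
      push_cast at hs
      have hgoal : f (j + 2) = (((j : ℝ) + 1) * (-(T / l) * sa l j) - T) / l := by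
        field_simp at hs ⊢
        linarith
      rw [hgoal, sa_succ hl j]
      field_simp
      ring
    refine ⟨hleft, fun h => ?_⟩
    rcases lt_or_ge (j + 1) k with h2 | h2
    · have hk2 : j + 1 = k - 1 := by omega
      have hL := hleft h2
      have hov : T * sa l (j + 1) = C * sb l (j + 1) := by
        rw [hk2, hT, hCdef]; exact overlap hl hk
      rw [hL, neg_mul, neg_mul, neg_eq_iff_eq_neg, neg_neg, div_mul_eq_mul_div,
        div_mul_eq_mul_div, hov]
    · have hfj := ih.2 (by omega)
      have hs := hf.2 (j + 1)
      rw [if_pos (by omega), hfj] at hs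
      push_cast at hs
      have hj1 : ((j : ℝ) + 1) ≠ 0 := by positivity
      have hstep : l * f (j + 2) = ((j : ℝ) + 1) * (-(C / l) * sb l j) + C := by
        rw [← hT, ← hC] at hs; linarith
      rw [sb_rec hl j] at hstep
      have h2' : l * f (j + 2) = -C * sb l (j + 1) := by
        rw [hstep]; field_simp; ring
      have : f (j + 2) = (-C * sb l (j + 1)) / l := by
        field_simp at h2' ⊢; linarith
      rw [this]; field_simp

end SteinAux

/-- Lemma 2 (ii): monotonicity/sign properties of the forward differences of the
Stein solution for the indicator of `[k, inf)`. -/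
theorem stein_diff_signs (l : ℝ) (hl : 0 < l) (k : ℕ) (hk : 1 ≤ k) (f : ℕ → ℝ)
    (hf : IsSteinSolution l k f) :
    (∀ i : ℕ, i ≤ k - 1 → f (i + 1) - f i ≤ 0) ∧
    (∀ i : ℕ, k ≤ i → 0 ≤ f (i + 1) - f i) ∧
    (∀ i : ℕ, i ≠ k - 1 → (f (i + 2) - f (i + 1)) - (f (i + 1) - f i) ≤ 0) := by
    classical
  have hm := SteinAux.master hl hk hf
  set T := poissonTail l k with hT
  set C := poissonCDF l (k - 1) with hCdef
  have hT0 : 0 ≤ T := by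
    rw [hT, poissonTail]
    exact tsum_nonneg fun i => SteinAux.pp_nonneg hl _
  have hC0 : 0 ≤ C := by
    rw [hCdef, poissonCDF]
    exact Finset.sum_nonneg fun i _ => SteinAux.pp_nonneg hl _
  have hlinv : 0 ≤ T / l := by positivity
  have hcinv : 0 ≤ C / l := by positivity
  refine ⟨?_, ?_, ?_⟩
  · -- part 1
    intro i hi
    match i with
    | 0 => rw [hf.1]; simp
    | (m + 1) =>
      have h1 : m + 1 < k := by omega
      have hfm1 := (hm (m + 1)).1 h1
      have hfm := (hm m).1 (by omega)
      rw [hfm1, hfm, SteinAux.sa_diff hl m]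
      have := SteinAux.sda_nonneg hl m
      nlinarith
  · -- part 2
    intro i hi
    obtain ⟨m, rfl⟩ : ∃ m, i = m + 1 := ⟨i - 1, by omega⟩
    have hfm2 := (hm (m + 1)).2 (by omega)
    have hfm := (hm m).2 (by omega)
    rw [hfm2, hfm]
    have := SteinAux.sb_antitone hl m
    nlinarith
  · -- part 3
    intro i hne
    rcases lt_or_ge i (k - 1) with h | h
    · -- left regime, k ≥ 2, i + 1 ≤ k - 1
      match i with
      | 0 =>
        have h1 : 1 < k := by omega
        have hf2 := (hm 1).1 h1
        have hf1 := (hm 0).1 (by omega)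
        have hf0 : f 0 = f 1 := hf.1
        have hd : SteinAux.sa l 1 = SteinAux.sa l 0 + SteinAux.sda l 0 := by
          simpa using SteinAux.sa_diff hl 0
        norm_num at hf2 hf1 ⊢
        rw [hf2, hf1, hf0, hf1, hd]
        have := SteinAux.sda_nonneg hl 0
        nlinarith
      | (m + 1) =>
        have h2 : m + 2 < k := by omega
        have hfm2 := (hm (m + 2)).1 (by omega)
        have hfm1 := (hm (m + 1)).1 (by omega)
        have hfm := (hm m).1 (by omega)
        rw [show m + 2 + 1 = m + 1 + 2 from by omega] at hfm2
        rw [hfm2, hfm1, hfm, SteinAux.sa_diff hl (m + 1), SteinAux.sa_diff hl m]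
        have := SteinAux.sda_mono hl m
        nlinarith
    · -- right regime : k ≤ i
      have hki : k ≤ i := by omega
      obtain ⟨m, rfl⟩ : ∃ m, i = m + 1 := ⟨i - 1, by omega⟩
      have hfm3 := (hm (m + 2)).2 (by omega)
      have hfm2 := (hm (m + 1)).2 (by omega)
      have hfm := (hm m).2 (by omega)
      rw [show m + 2 + 1 = m + 1 + 2 from by omega] at hfm3
      rw [hfm3, hfm2, hfm]
      have := SteinAux.sb_convex hl m
      nlinarith
end

section
/- Let λ > 0, let k ≥ 2 be an integer, and let f be the solution of the Poisson–Stein equation for the indicator of [k,∞). Then sup_{0 ≤ i ≤ k−1} |Δf(i)| = |Δf(k−1)| = C1−(λ,k)·F̄_λ(k) and sup_{i ≥ k} |Δf(i)| = |Δf(k)| = C1+(λ,k)·F̄_λ(k), where C1−(λ,k) = (F_λ(k-1)/(k·π_k(λ)))·(1 − F_λ(k-2)·λ/((k-1)·F_λ(k-1))) and C1+(λ,k) = (F_λ(k-1)/(k·π_k(λ)))·(1 − F̄_λ(k+1)·k/(F̄_λ(k)·λ)). -/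
open MeasureTheory ProbabilityTheory Finset Real

/-- `C1-(l,k)`. -/
noncomputable def SteinC1m (l : ℝ) (k : ℕ) : ℝ :=
  SteinC0 l k * (1 - poissonCDF l (k - 2) * l / ((k - 1) * poissonCDF l (k - 1)))

/-- `C1+(l,k)`. -/
noncomputable def SteinC1p (l : ℝ) (k : ℕ) : ℝ :=
  SteinC0 l k * (1 - poissonTail l (k + 1) * k / (poissonTail l k * l))

namespace SteinAux

noncomputable def pp (l : ℝ) (n : ℕ) : ℝ := l ^ n / n.factorial
noncomputable def G (l : ℝ) (n : ℕ) : ℝ := ∑ i ∈ Finset.range n, pp l i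
noncomputable def Q (l : ℝ) (n : ℕ) : ℝ := ∑' i : ℕ, pp l (n + i)
noncomputable def A (l : ℝ) (j : ℕ) : ℝ := ∑ i ∈ Finset.range (j+1), ((j : ℝ) - i) * pp l i
noncomputable def B (l : ℝ) (j : ℕ) : ℝ := ∑' i : ℕ, ((i : ℝ) + 1) * pp l (j + 1 + i)
noncomputable def Cc (l : ℝ) (j : ℕ) : ℝ := ∑' i : ℕ, ((i : ℝ) + 1) * ((i : ℝ) + 2) * pp l (j + 2 + i)

lemma pp_pos_s6 {l : ℝ} (hl : 0 < l) (n : ℕ) : 0 < pp l n := by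
  have : (0:ℝ) < n.factorial := by exact_mod_cast n.factorial_pos
  exact div_pos (pow_pos hl n) this

lemma lpp {l : ℝ} (n : ℕ) : l * pp l n = ((n : ℝ) + 1) * pp l (n + 1) := by
  unfold pp
  rw [Nat.factorial_succ]
  have h1 : (n.factorial : ℝ) ≠ 0 := by exact_mod_cast n.factorial_ne_zero
  have h2 : ((n:ℝ) + 1) ≠ 0 := by positivity
  push_cast
  field_simp
  ring

lemma pp_bound {l : ℝ} (hl : 0 < l) (a i : ℕ) :
    pp l (a + i) ≤ l ^ a * (l ^ i / i.factorial) := by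
  unfold pp
  rw [pow_add, mul_div_assoc]
  apply mul_le_mul_of_nonneg_left _ (by positivity)
  apply div_le_div_of_nonneg_left (by positivity) (by exact_mod_cast i.factorial_pos)
  exact_mod_cast Nat.factorial_le (by omega)

lemma summable_pp {l : ℝ} (hl : 0 < l) (a : ℕ) : Summable (fun i : ℕ => pp l (a + i)) :=
  Summable.of_nonneg_of_le (fun i => (pp_pos_s6 hl _).le) (pp_bound hl a)
    ((Real.summable_pow_div_factorial l).mul_left _)

lemma lpp' {l : ℝ} (a b : ℕ) (h : b = a + 1) : l * pp l a = ((a:ℝ) + 1) * pp l b := by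
  subst h; exact lpp a

lemma summable_B {l : ℝ} (hl : 0 < l) (j : ℕ) :
    Summable (fun i : ℕ => ((i : ℝ) + 1) * pp l (j + 1 + i)) := by
  refine Summable.of_nonneg_of_le (fun i => ?_) (fun i => ?_)
    ((summable_pp hl j).mul_left l)
  · have := (pp_pos_s6 hl (j+1+i)).le; positivity
  · have h1 : l * pp l (j + i) = (((j+i : ℕ):ℝ) + 1) * pp l (j + 1 + i) :=
      lpp' (j+i) (j+1+i) (by omega)
    rw [h1]
    apply mul_le_mul_of_nonneg_right _ (pp_pos_s6 hl _).le
    have : (0:ℝ) ≤ (j:ℝ) := Nat.cast_nonneg j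
    push_cast
    linarith

lemma summable_C {l : ℝ} (hl : 0 < l) (j : ℕ) :
    Summable (fun i : ℕ => ((i : ℝ) + 1) * ((i : ℝ) + 2) * pp l (j + 2 + i)) := by
  refine Summable.of_nonneg_of_le (fun i => ?_) (fun i => ?_)
    (((summable_pp hl j).mul_left l).mul_left l)
  · have := (pp_pos_s6 hl (j+2+i)).le; positivity
  · have h1 : l * pp l (j + i) = (((j+i : ℕ):ℝ) + 1) * pp l (j + 1 + i) :=
      lpp' (j+i) (j+1+i) (by omega)
    have h2 : l * pp l (j + 1 + i) = (((j+1+i : ℕ):ℝ) + 1) * pp l (j + 2 + i) :=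
      lpp' (j+1+i) (j+2+i) (by omega)
    have hj : (0:ℝ) ≤ (j:ℝ) := Nat.cast_nonneg j
    have hi : (0:ℝ) ≤ (i:ℝ) := Nat.cast_nonneg i
    have hp := (pp_pos_s6 hl (j+2+i)).le
    have hfac : ((i : ℝ) + 1) * ((i : ℝ) + 2) ≤ (((j+i : ℕ):ℝ) + 1) * ((((j+1+i : ℕ)):ℝ) + 1) := by
      push_cast; nlinarith
    calc ((i : ℝ) + 1) * ((i : ℝ) + 2) * pp l (j + 2 + i)
        ≤ (((j+i : ℕ):ℝ) + 1) * ((((j+1+i : ℕ)):ℝ) + 1) * pp l (j + 2 + i) :=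
          mul_le_mul_of_nonneg_right hfac hp
      _ = l * (l * pp l (j + i)) := by rw [h1]; linear_combination (-(((j+i:ℕ):ℝ) + 1)) * h2

lemma Q_pos {l : ℝ} (hl : 0 < l) (n : ℕ) : 0 < Q l n :=
  Summable.tsum_pos (summable_pp hl n) (fun i => (pp_pos_s6 hl _).le) 0 (pp_pos_s6 hl _)

lemma G_pos {l : ℝ} (hl : 0 < l) (n : ℕ) (hn : 1 ≤ n) : 0 < G l n :=
  Finset.sum_pos (fun i _ => pp_pos_s6 hl i) (Finset.nonempty_range_iff.mpr (by omega))

lemma B_nonneg {l : ℝ} (hl : 0 < l) (j : ℕ) : 0 ≤ B l j :=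
  tsum_nonneg (fun i => by have := (pp_pos_s6 hl (j+1+i)).le; positivity)

lemma A_nonneg {l : ℝ} (hl : 0 < l) (j : ℕ) : 0 ≤ A l j := by
  refine Finset.sum_nonneg fun i hi => ?_
  simp only [Finset.mem_range] at hi
  have h1 : (i : ℝ) ≤ j := by exact_mod_cast Nat.lt_succ_iff.mp hi
  exact mul_nonneg (by linarith) (pp_pos_s6 hl i).le

lemma exp_eq (l : ℝ) : Real.exp l = ∑' n : ℕ, pp l n := by
  rw [Real.exp_eq_exp_ℝ, NormedSpace.exp_eq_tsum_div]
  rfl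

lemma GQ {l : ℝ} (hl : 0 < l) (n : ℕ) : G l n + Q l n = Real.exp l := by
  have hs : Summable (fun i : ℕ => pp l i) := by simpa using summable_pp hl 0
  have h := Summable.sum_add_tsum_nat_add (f := fun i : ℕ => pp l i) n hs
  rw [exp_eq, G, Q, ← h]
  congr 1
  exact tsum_congr fun i => by rw [Nat.add_comm]


lemma consec (j m : ℕ) : 0 ≤ (((j:ℝ) + 1) - m) * ((j:ℝ) - m) := by
  have h : (((j:ℝ) + 1) - m) * ((j:ℝ) - m) = ((((j:ℤ) - m : ℤ) : ℝ) + 1) * (((j:ℤ) - m : ℤ) : ℝ) := by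
    push_cast; ring
  rw [h]
  set z : ℤ := (j:ℤ) - m with hz
  rcases le_or_gt 0 z with h0 | h0
  · have h1 : (0:ℝ) ≤ (z:ℝ) := by exact_mod_cast h0
    nlinarith
  · have h1 : z ≤ -1 := by omega
    have h2 : (z:ℝ) ≤ -1 := by exact_mod_cast h1
    nlinarith

lemma hA {l : ℝ} (j : ℕ) : A l j = (j:ℝ) * G l (j+1) - l * G l j := by
  have hlG : l * G l j = ∑ i ∈ Finset.range (j+1), (i:ℝ) * pp l i := by
    rw [G, Finset.mul_sum, Finset.sum_range_succ' (fun i => (i:ℝ) * pp l i) j]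
    simp only [Nat.cast_zero, zero_mul, add_zero]
    refine Finset.sum_congr rfl fun i _ => ?_
    rw [lpp]; push_cast; ring
  rw [A, hlG, G, Finset.mul_sum, ← Finset.sum_sub_distrib]
  exact Finset.sum_congr rfl fun i _ => by ring

lemma hAA {l : ℝ} (hl : 0 < l) (j : ℕ) : 0 ≤ (j:ℝ) * A l (j+1) - l * A l j := by
  have h1 : l * A l j = ∑ m ∈ Finset.range (j+2), (((j:ℝ) + 1) - m) * m * pp l m := by
    rw [A, Finset.mul_sum, Finset.sum_range_succ'
      (fun m => (((j:ℝ) + 1) - m) * m * pp l m) (j+1)]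
    simp only [Nat.cast_zero, mul_zero, zero_mul, add_zero]
    refine Finset.sum_congr rfl fun i _ => ?_
    rw [← mul_assoc, mul_comm l ((j:ℝ) - i), mul_assoc, lpp]
    push_cast; ring
  have h2 : (j:ℝ) * A l (j+1) = ∑ m ∈ Finset.range (j+2), (j:ℝ) * ((((j:ℝ) + 1) - m) * pp l m) := by
    rw [A, Finset.mul_sum]
    refine Finset.sum_congr rfl fun i _ => ?_
    push_cast; ring
  rw [h1, h2, ← Finset.sum_sub_distrib]
  refine Finset.sum_nonneg fun m _ => ?_
  have hc : 0 ≤ (((j:ℝ) + 1) - m) * ((j:ℝ) - m) * pp l m :=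
    mul_nonneg (consec j m) (pp_pos_s6 hl m).le
  have he : (j:ℝ) * ((((j:ℝ) + 1) - m) * pp l m) - (((j:ℝ) + 1) - m) * m * pp l m
      = (((j:ℝ) + 1) - m) * ((j:ℝ) - m) * pp l m := by ring
  linarith

lemma hlQ {l : ℝ} (hl : 0 < l) (j : ℕ) : l * Q l j = B l j + (j:ℝ) * Q l (j+1) := by
  rw [Q, ← tsum_mul_left]
  have h1 : ∀ i : ℕ, l * pp l (j+i)
      = ((i:ℝ)+1) * pp l (j+1+i) + (j:ℝ) * pp l (j+1+i) := by
    intro i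
    rw [lpp' (j+i) (j+1+i) (by omega)]
    push_cast; ring
  rw [tsum_congr h1, Summable.tsum_add (summable_B hl j) ((summable_pp hl (j+1)).mul_left (j:ℝ))]
  rw [B, Q, tsum_mul_left]

lemma hAB {l : ℝ} (hl : 0 < l) (j : ℕ) :
    A l j = ((j:ℝ) - l) * Real.exp l + B l j := by
  have g1 := GQ hl j
  have g2 := GQ hl (j+1)
  have q := hlQ hl j
  rw [hA]
  push_cast
  linear_combination (j:ℝ) * g2 - l * g1 + q

lemma hlB {l : ℝ} (hl : 0 < l) (j : ℕ) :
    l * B l j = Cc l j + (j:ℝ) * B l (j+1) := by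
  rw [B, ← tsum_mul_left]
  have h1 : ∀ i : ℕ, l * (((i:ℝ)+1) * pp l (j+1+i))
      = ((i:ℝ)+1) * ((i:ℝ)+2) * pp l (j+2+i) + (j:ℝ) * (((i:ℝ)+1) * pp l (j+1+1+i)) := by
    intro i
    have e : pp l (j+1+1+i) = pp l (j+2+i) := by rw [show j+1+1+i = j+2+i from by omega]
    have h2 := lpp' (l := l) (j+1+i) (j+2+i) (by omega)
    rw [e]
    calc l * (((i:ℝ)+1) * pp l (j+1+i)) = ((i:ℝ)+1) * (l * pp l (j+1+i)) := by ring
      _ = ((i:ℝ)+1) * ((((j+1+i : ℕ):ℝ) + 1) * pp l (j+2+i)) := by rw [h2]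
      _ = ((i:ℝ)+1) * ((i:ℝ)+2) * pp l (j+2+i) + (j:ℝ) * (((i:ℝ)+1) * pp l (j+2+i)) := by
          push_cast; ring
  rw [tsum_congr h1, Summable.tsum_add (summable_C hl j) (((summable_B hl (j+1))).mul_left (j:ℝ))]
  rw [Cc, B, tsum_mul_left]

lemma Cc_nonneg {l : ℝ} (hl : 0 < l) (j : ℕ) : 0 ≤ Cc l j :=
  tsum_nonneg fun i => by have := (pp_pos_s6 hl (j+2+i)).le; positivity


lemma tail_eq_s6 {l : ℝ} (k : ℕ) : poissonTail l k = Real.exp (-l) * Q l k := by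
  rw [poissonTail, Q, ← tsum_mul_left]
  exact tsum_congr fun i => by rw [_root_.poissonPMF, pp, mul_div_assoc]

lemma cdf_eq_s6 (l : ℝ) (j : ℕ) : poissonCDF l j = Real.exp (-l) * G l (j+1) := by
  rw [poissonCDF, G, Finset.mul_sum]
  exact Finset.sum_congr rfl fun i _ => by rw [_root_.poissonPMF, pp, mul_div_assoc]

lemma pmf_eq (l : ℝ) (j : ℕ) : poissonPMF l j = Real.exp (-l) * pp l j := by
  rw [_root_.poissonPMF, pp, mul_div_assoc]

lemma tail_pos {l : ℝ} (hl : 0 < l) (k : ℕ) : 0 < poissonTail l k := by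
  rw [tail_eq_s6]
  exact mul_pos (Real.exp_pos _) (Q_pos hl k)

noncomputable def Ssum (l : ℝ) (k j : ℕ) : ℝ :=
  ∑ i ∈ Finset.range j, pp l i * ((if k ≤ i then (1:ℝ) else 0) - poissonTail l k)

noncomputable def Tt (l : ℝ) (k j : ℕ) : ℝ := (j:ℝ) * Ssum l k (j+1) - l * Ssum l k j

lemma hfS {l : ℝ} (hl : 0 < l) (k : ℕ) (f : ℕ → ℝ) (hf : IsSteinSolution l k f) :
    ∀ j : ℕ, f (j+1) = (j.factorial : ℝ) / l ^ (j+1) * Ssum l k (j+1) := by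
  have hl0 : l ≠ 0 := ne_of_gt hl
  intro j
  induction j with
  | zero =>
    have h0 := hf.2 0
    simp only [Nat.cast_zero, zero_mul, sub_zero] at h0
    have hS : Ssum l k 1 = pp l 0 * ((if k ≤ 0 then (1:ℝ) else 0) - poissonTail l k) := by
      rw [Ssum, Finset.sum_range_one]
    have hpp0 : pp l 0 = 1 := by simp [pp]
    rw [hS, hpp0, ← h0]
    simp only [Nat.factorial_zero, Nat.cast_one, pow_one]
    field_simp
    ring
  | succ n ih =>
    have h1 := hf.2 (n+1)
    have hS : Ssum l k (n+2) = Ssum l k (n+1)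
        + pp l (n+1) * ((if k ≤ n+1 then (1:ℝ) else 0) - poissonTail l k) :=
      Finset.sum_range_succ _ _
    set c : ℝ := (if k ≤ n+1 then (1:ℝ) else 0) - poissonTail l k with hc
    have h2 : f (n+2) = (((n:ℝ)+1) * f (n+1) + c) / l := by
      rw [eq_div_iff hl0]
      push_cast at h1
      linarith
    rw [h2, ih, hS]
    have hfac : ((n+1).factorial : ℝ) = ((n:ℝ)+1) * (n.factorial : ℝ) := by
      rw [Nat.factorial_succ]; push_cast; ring
    have hppn : pp l (n+1) = l^(n+1) / ((n+1).factorial : ℝ) := rfl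
    rw [hppn, hfac]
    have hfn : (n.factorial : ℝ) ≠ 0 := by exact_mod_cast n.factorial_ne_zero
    have hn1 : ((n:ℝ)+1) ≠ 0 := by positivity
    field_simp
    ring

lemma Df_eq {l : ℝ} (hl : 0 < l) (k : ℕ) (f : ℕ → ℝ) (hf : IsSteinSolution l k f) (j : ℕ) :
    f (j+2) - f (j+1) = (j.factorial : ℝ) / l ^ (j+2) * Tt l k (j+1) := by
  have hl0 : l ≠ 0 := ne_of_gt hl
  have e2 := hfS hl k f hf (j+1)
  have e1 := hfS hl k f hf j
  rw [show j+1+1 = j+2 from rfl] at e2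
  rw [e1, e2, Tt]
  have hfac : ((j+1).factorial : ℝ) = ((j:ℝ)+1) * (j.factorial : ℝ) := by
    rw [Nat.factorial_succ]; push_cast; ring
  rw [hfac]
  push_cast
  field_simp
  ring

lemma S_below {l : ℝ} (k j : ℕ) (h : j ≤ k) :
    Ssum l k j = -(poissonTail l k) * G l j := by
  rw [Ssum, G, Finset.mul_sum]
  refine Finset.sum_congr rfl fun i hi => ?_
  simp only [Finset.mem_range] at hi
  rw [if_neg (by omega)]
  ring

lemma T_below {l : ℝ} (k j : ℕ) (h : j + 1 ≤ k) :
    Tt l k j = -(poissonTail l k) * A l j := by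
  rw [Tt, S_below k (j+1) h, S_below k j (by omega), hA]
  ring

lemma S_above2 {l : ℝ} (hl : 0 < l) (k j : ℕ) (h : k ≤ j) :
    Ssum l k j = (G l k / Real.exp l) * G l j - G l k := by
  have hE : Real.exp l ≠ 0 := Real.exp_ne_zero l
  have h1 : 1 - poissonTail l k = G l k / Real.exp l := by
    have gq := GQ hl k
    rw [tail_eq_s6, Real.exp_neg]
    field_simp
    linarith
  induction j, h using Nat.le_induction with
  | base =>
    rw [S_below k k le_rfl]
    have : -(poissonTail l k) * G l k = (1 - poissonTail l k) * G l k - G l k := by ring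
    rw [this, h1]
  | succ j hj ih =>
    have hS : Ssum l k (j+1) = Ssum l k j
        + pp l j * ((if k ≤ j then (1:ℝ) else 0) - poissonTail l k) :=
      Finset.sum_range_succ _ _
    have hG : G l (j+1) = G l j + pp l j := Finset.sum_range_succ _ _
    rw [hS, ih, hG, if_pos hj, h1]
    ring

lemma T_above {l : ℝ} (hl : 0 < l) (k j : ℕ) (h : k ≤ j) :
    Tt l k j = (G l k / Real.exp l) * B l j := by
  have hE : Real.exp l ≠ 0 := Real.exp_ne_zero l
  have h1 : Tt l k j = (G l k / Real.exp l) * A l j - ((j:ℝ) - l) * G l k := by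
    rw [Tt, S_above2 hl k (j+1) (by omega), S_above2 hl k j h, hA]
    ring
  rw [h1, hAB hl j]
  field_simp
  ring

end SteinAux



/-- Lemma 2 (iii): sup of `|Δf|` below `k` is attained at `k-1` and equals
`C1-(l,k)·F̄_l(k)`; sup of `|Δf|` on `[k, ∞)` is attained at `k` and equals
`C1+(l,k)·F̄_l(k)`. -/
theorem stein_diff_sup (l : ℝ) (hl : 0 < l) (k : ℕ) (hk : 2 ≤ k) (f : ℕ → ℝ)
    (hf : IsSteinSolution l k f) :
    (∀ i : ℕ, i ≤ k - 1 → |f (i + 1) - f i| ≤ |f k - f (k - 1)|) ∧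
    |f k - f (k - 1)| = SteinC1m l k * poissonTail l k ∧
    (∀ i : ℕ, k ≤ i → |f (i + 1) - f i| ≤ |f (k + 1) - f k|) ∧
    |f (k + 1) - f k| = SteinC1p l k * poissonTail l k := by
  classical
  obtain ⟨m, rfl⟩ : ∃ m, k = m + 2 := ⟨k - 2, by omega⟩
  have hl0 : l ≠ 0 := ne_of_gt hl
  have hE : Real.exp l ≠ 0 := Real.exp_ne_zero l
  have hτpos : 0 < poissonTail l (m+2) := SteinAux.tail_pos hl (m+2)
  have hGpos : 0 < SteinAux.G l (m+2) := SteinAux.G_pos hl _ (by omega)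
  -- |Δf| formula below k
  have habsb : ∀ i : ℕ, i ≤ m → |f (i+2) - f (i+1)|
      = (i.factorial : ℝ) / l ^ (i+2) * (poissonTail l (m+2) * SteinAux.A l (i+1)) := by
    intro i hi
    have hD := SteinAux.Df_eq hl (m+2) f hf i
    rw [SteinAux.T_below (m+2) (i+1) (by omega)] at hD
    have h2 : f (i+2) - f (i+1)
        = -((i.factorial : ℝ) / l ^ (i+2) * (poissonTail l (m+2) * SteinAux.A l (i+1))) := by
      rw [hD]; ring
    rw [h2, abs_neg, abs_of_nonneg]
    have h3 : (0:ℝ) ≤ (i.factorial : ℝ) / l ^ (i+2) := by positivity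
    exact mul_nonneg h3 (mul_nonneg hτpos.le (SteinAux.A_nonneg hl (i+1)))
  have hstepb : ∀ i : ℕ, i + 1 ≤ m → |f (i+2) - f (i+1)| ≤ |f (i+3) - f (i+2)| := by
    intro i hi
    have h2 := habsb (i+1) (by omega)
    rw [show (i+1)+2 = i+3 from by omega, show (i+1)+1 = i+2 from by omega] at h2
    rw [habsb i (by omega), h2]
    have key := SteinAux.hAA hl (i+1)
    rw [show (i+1)+1 = i+2 from by omega] at key
    push_cast at key
    have hfn : (0:ℝ) < (i.factorial : ℝ) := by exact_mod_cast i.factorial_pos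
    have e1 : (i.factorial : ℝ)/l^(i+2) * (poissonTail l (m+2) * SteinAux.A l (i+1))
        = (i.factorial:ℝ) * poissonTail l (m+2) / l^(i+3) * (l * SteinAux.A l (i+1)) := by
      field_simp; ring
    have e2 : ((i+1).factorial : ℝ)/l^(i+3) * (poissonTail l (m+2) * SteinAux.A l (i+2))
        = (i.factorial:ℝ) * poissonTail l (m+2) / l^(i+3) * (((i:ℝ)+1) * SteinAux.A l (i+2)) := by
      rw [Nat.factorial_succ]; push_cast; field_simp
    rw [e1, e2]
    apply mul_le_mul_of_nonneg_left _ (by positivity)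
    linarith
  have hmonob : ∀ d i : ℕ, i + d = m → |f (i+2) - f (i+1)| ≤ |f (m+2) - f (m+1)| := by
    intro d
    induction d with
    | zero => intro i hi; rw [show i = m from by omega]
    | succ d ih =>
      intro i hi
      calc |f (i+2) - f (i+1)| ≤ |f (i+3) - f (i+2)| := hstepb i (by omega)
        _ ≤ |f (m+2) - f (m+1)| := by
            have h3 := ih (i+1) (by omega)
            rw [show (i+1)+2 = i+3 from by omega, show (i+1)+1 = i+2 from by omega] at h3
            exact h3
  -- |Δf| formula above k
  have habsa : ∀ j : ℕ, m+1 ≤ j → |f (j+2) - f (j+1)|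
      = (j.factorial : ℝ) / l ^ (j+2) * (SteinAux.G l (m+2) / Real.exp l * SteinAux.B l (j+1)) := by
    intro j hj
    have hD := SteinAux.Df_eq hl (m+2) f hf j
    rw [SteinAux.T_above hl (m+2) (j+1) (by omega)] at hD
    rw [hD]
    apply abs_of_nonneg
    have h1 := SteinAux.B_nonneg hl (j+1)
    have h2 := hGpos.le
    have h3 := (Real.exp_pos l).le
    positivity
  have hstepa : ∀ j : ℕ, m+1 ≤ j → |f (j+3) - f (j+2)| ≤ |f (j+2) - f (j+1)| := by
    intro j hj
    have h2 := habsa (j+1) (by omega)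
    rw [show (j+1)+2 = j+3 from by omega, show (j+1)+1 = j+2 from by omega] at h2
    rw [h2, habsa j hj]
    have key := SteinAux.hlB hl (j+1)
    rw [show (j+1)+1 = j+2 from by omega] at key
    push_cast at key
    have hCc := SteinAux.Cc_nonneg hl (j+1)
    have hkey : ((j:ℝ)+1) * SteinAux.B l (j+2) ≤ l * SteinAux.B l (j+1) := by linarith
    have hfn : (0:ℝ) < (j.factorial : ℝ) := by exact_mod_cast j.factorial_pos
    have e1 : ((j+1).factorial : ℝ)/l^(j+3) * (SteinAux.G l (m+2)/Real.exp l * SteinAux.B l (j+2))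
        = (j.factorial:ℝ) * (SteinAux.G l (m+2)/Real.exp l) / l^(j+3)
          * (((j:ℝ)+1) * SteinAux.B l (j+2)) := by
      rw [Nat.factorial_succ]; push_cast; field_simp
    have e2 : (j.factorial : ℝ)/l^(j+2) * (SteinAux.G l (m+2)/Real.exp l * SteinAux.B l (j+1))
        = (j.factorial:ℝ) * (SteinAux.G l (m+2)/Real.exp l) / l^(j+3)
          * (l * SteinAux.B l (j+1)) := by
      field_simp; ring
    rw [e1, e2]
    apply mul_le_mul_of_nonneg_left hkey
    have := hGpos.le
    positivity
  have hmonoa : ∀ d : ℕ, |f (m+1+d+2) - f (m+1+d+1)| ≤ |f (m+3) - f (m+2)| := by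
    intro d
    induction d with
    | zero => rw [show m+1+0+2 = m+3 from by omega, show m+1+0+1 = m+2 from by omega]
    | succ d ih =>
      calc |f (m+1+(d+1)+2) - f (m+1+(d+1)+1)| = |f ((m+1+d)+3) - f ((m+1+d)+2)| := by
            rw [show m+1+(d+1)+2 = (m+1+d)+3 from by omega,
                show m+1+(d+1)+1 = (m+1+d)+2 from by omega]
        _ ≤ |f ((m+1+d)+2) - f ((m+1+d)+1)| := hstepa (m+1+d) (by omega)
        _ ≤ |f (m+3) - f (m+2)| := ih
  refine ⟨?_, ?_, ?_, ?_⟩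
  · -- goal 1
    intro i hi
    rw [show m+2-1 = m+1 from by omega] at hi ⊢
    rcases Nat.eq_zero_or_pos i with h0 | h1
    · subst h0
      have hz : f (0+1) - f 0 = 0 := by
        rw [show (0:ℕ)+1 = 1 from rfl, ← hf.1]; ring
      rw [hz, abs_zero]
      exact abs_nonneg _
    · obtain ⟨i', rfl⟩ : ∃ i', i = i' + 1 := ⟨i-1, by omega⟩
      have h3 := hmonob (m - i') i' (by omega)
      rw [show i'+2 = i'+1+1 from by omega] at h3
      exact h3
  · -- goal 2 : equality at k-1
    rw [show m+2-1 = m+1 from by omega]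
    rw [habsb m le_rfl, SteinAux.hA]
    rw [SteinC1m, SteinC0, show m+2-1 = m+1 from by omega, show m+2-2 = m from by omega,
        SteinAux.cdf_eq_s6, SteinAux.cdf_eq_s6, SteinAux.pmf_eq, Real.exp_neg]
    have hG1 : 0 < SteinAux.G l (m+1) := SteinAux.G_pos hl _ (by omega)
    have hpp : SteinAux.pp l (m+2) = l^(m+2) / ((m+2).factorial : ℝ) := rfl
    have hfac : ((m+2).factorial : ℝ) = ((m:ℝ)+2) * (((m:ℝ)+1) * (m.factorial:ℝ)) := by
      rw [Nat.factorial_succ, Nat.factorial_succ]; push_cast; ring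
    have hfn : (0:ℝ) < (m.factorial : ℝ) := by exact_mod_cast m.factorial_pos
    rw [hpp, hfac]
    push_cast
    set b := SteinAux.G l (m+2) with hb
    set a := SteinAux.G l (m+1) with ha
    set t := poissonTail l (m+2) with htt
    have hbne : b ≠ 0 := ne_of_gt hGpos
    have hane : a ≠ 0 := ne_of_gt hG1
    have hm1 : ((m:ℝ)+1) ≠ 0 := by positivity
    have hm2 : ((m:ℝ)+2) ≠ 0 := by positivity
    have hne3 : ((m:ℝ) + 2 - 1) * b ≠ 0 := by
      apply mul_ne_zero _ hbne
      intro hcon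
      have hm0 : (0:ℝ) ≤ (m:ℝ) := Nat.cast_nonneg m
      linarith
    field_simp [hne3]
    have hm1' : (1 + (m:ℝ)) ≠ 0 := by positivity
    linear_combination (l * a) * (mul_inv_cancel₀ hm1')
  · -- goal 3
    intro i hi
    obtain ⟨d, rfl⟩ : ∃ d, i = m+2+d := ⟨i-(m+2), by omega⟩
    rw [show m+2+d+1 = m+1+d+2 from by omega, show m+2+d = m+1+d+1 from by omega,
        show m+2+1 = m+3 from by omega]
    exact hmonoa d
  · -- goal 4 : equality at k
    rw [show m+2+1 = m+3 from by omega]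
    have h := habsa (m+1) le_rfl
    rw [show m+1+2 = m+3 from by omega, show m+1+1 = m+2 from by omega] at h
    rw [h]
    have hB : SteinAux.B l (m+2) = l * SteinAux.Q l (m+2) - ((m:ℝ)+2) * SteinAux.Q l (m+3) := by
      have h5 := SteinAux.hlQ hl (m+2)
      rw [show m+2+1 = m+3 from by omega] at h5
      push_cast at h5
      linarith
    rw [SteinC1p, SteinC0, show m+2-1 = m+1 from by omega, show m+2+1 = m+3 from by omega,
        SteinAux.cdf_eq_s6, SteinAux.pmf_eq, SteinAux.tail_eq_s6, SteinAux.tail_eq_s6, hB, Real.exp_neg]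
    have hQ2 : 0 < SteinAux.Q l (m+2) := SteinAux.Q_pos hl _
    have hpp : SteinAux.pp l (m+2) = l^(m+2) / ((m+2).factorial : ℝ) := rfl
    have hfac : ((m+2).factorial : ℝ) = ((m:ℝ)+2) * ((m+1).factorial:ℝ) := by
      rw [Nat.factorial_succ]; push_cast; ring
    have hfn : (0:ℝ) < ((m+1).factorial : ℝ) := by exact_mod_cast (m+1).factorial_pos
    rw [hpp, hfac]
    push_cast
    set b := SteinAux.G l (m+2) with hb
    set q2 := SteinAux.Q l (m+2) with hq2
    set q3 := SteinAux.Q l (m+3) with hq3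
    have hbne : b ≠ 0 := ne_of_gt hGpos
    have hq2ne : q2 ≠ 0 := ne_of_gt hQ2
    have hm2 : ((m:ℝ)+2) ≠ 0 := by positivity
    field_simp
    ring
end

section
/- Let λ > 0, let k ≥ 2 be an integer, and let f be the solution of the Poisson–Stein equation for the indicator of [k,∞). Then sup_{i∈ℤ≥0} |Δf(i)| = C1(λ,k)·F̄_λ(k) and sup_{i∈ℤ≥0} |Δ²f(i)| = C2(λ,k)·F̄_λ(k). -/
open MeasureTheory ProbabilityTheory Finset Real

/- ### Auxiliary lemmas -/

lemma poissonPMF_pos {l : ℝ} (hl : 0 < l) (j : ℕ) : 0 < _root_.poissonPMF l j := by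
  unfold _root_.poissonPMF; positivity

lemma summable_poissonPMF (l : ℝ) : Summable (_root_.poissonPMF l) := by
  have h := (Real.summable_pow_div_factorial l).mul_left (Real.exp (-l))
  refine h.congr fun n => ?_
  simp [_root_.poissonPMF, mul_div_assoc]

lemma tsum_poissonPMF {l : ℝ} : ∑' i, _root_.poissonPMF l i = 1 := by
  have h : (fun i : ℕ => _root_.poissonPMF l i)
      = fun i => Real.exp (-l) * (l ^ i / i.factorial) := by
    ext i; simp [_root_.poissonPMF, mul_div_assoc]
  rw [h, tsum_mul_left]
  have : ∑' i : ℕ, l ^ i / (i.factorial : ℝ) = Real.exp l := by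
    rw [Real.exp_eq_exp_ℝ]
    exact (NormedSpace.expSeries_div_hasSum_exp l).tsum_eq
  rw [this, ← Real.exp_add]; simp

lemma poissonCDF_pos {l : ℝ} (hl : 0 < l) (j : ℕ) : 0 < poissonCDF l j := by
  apply Finset.sum_pos (fun i _ => poissonPMF_pos hl i)
  exact ⟨0, by simp⟩

lemma summable_tail (l : ℝ) (n : ℕ) : Summable (fun i => _root_.poissonPMF l (n + i)) := by
  have := (summable_nat_add_iff (f := _root_.poissonPMF l) n).2 (summable_poissonPMF l)
  exact this.congr fun i => by rw [add_comm]

lemma poissonTail_pos {l : ℝ} (hl : 0 < l) (j : ℕ) : 0 < poissonTail l j :=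
  Summable.tsum_pos (summable_tail l j) (fun i => (poissonPMF_pos hl _).le) 0 (poissonPMF_pos hl _)

lemma poissonCDF_add_tail {l : ℝ} (j : ℕ) : poissonCDF l j + poissonTail l (j + 1) = 1 := by
  have h := (summable_poissonPMF l).sum_add_tsum_nat_add (j + 1)
  unfold poissonCDF poissonTail
  rw [show (∑' i : ℕ, _root_.poissonPMF l (j + 1 + i))
      = ∑' i : ℕ, _root_.poissonPMF l (i + (j+1)) from tsum_congr fun i => by rw [add_comm]]
  rw [h, tsum_poissonPMF]

lemma poissonTail_succ {l : ℝ} (n : ℕ) :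
    poissonTail l n = _root_.poissonPMF l n + poissonTail l (n + 1) := by
  unfold poissonTail
  rw [Summable.tsum_eq_zero_add (summable_tail l n)]
  rw [add_zero]
  congr 1
  exact tsum_congr fun i => by rw [show n + (i + 1) = n + 1 + i by omega]

/- ### descFactorial lemmas -/

lemma descFac_succ_left (j m : ℕ) :
    (j+1).descFactorial (m+1) = j.descFactorial (m+1) + (m+1) * j.descFactorial m := by
  rw [Nat.succ_descFactorial_succ, Nat.descFactorial_succ]
  rcases le_or_gt m j with h | h
  · have hh : j - m + (m + 1) = j + 1 := by omega
    rw [← hh, Nat.add_mul]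
  · rw [Nat.descFactorial_of_lt h]
    simp

lemma descFac_mono (j m : ℕ) : j.descFactorial m ≤ (j+1).descFactorial m := by
  cases m with
  | zero => simp
  | succ m => rw [descFac_succ_left]; omega

lemma descFac_convex (j m : ℕ) :
    2 * (j+1).descFactorial m ≤ j.descFactorial m + (j+2).descFactorial m := by
  cases m with
  | zero => simp [two_mul]
  | succ m =>
    have h1 := descFac_succ_left j m
    have h2 : (j+2).descFactorial (m+1) = (j+1).descFactorial (m+1) + (m+1) * (j+1).descFactorial m :=
      descFac_succ_left (j+1) m
    have h3 := descFac_mono j m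
    have := Nat.mul_le_mul_left (m+1) h3
    omega

lemma fact_ratio {j c : ℕ} (h : j ≤ c) :
    ((j+1).factorial : ℝ) / ((c+1).factorial : ℝ) ≤ (j.factorial : ℝ) / (c.factorial : ℝ) := by
  rw [div_le_div_iff₀ (by positivity) (by positivity)]
  rw [← Nat.cast_mul, ← Nat.cast_mul]
  exact_mod_cast by
    rw [Nat.factorial_succ, Nat.factorial_succ c]
    calc (j+1) * j.factorial * c.factorial ≤ (c+1) * (j.factorial * c.factorial) := by
          rw [mul_assoc]; exact Nat.mul_le_mul_right _ (by omega)
      _ = j.factorial * ((c+1) * c.factorial) := by ring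

/- ### The sequences `steinD` and `steinC` -/

noncomputable def steinD (l : ℝ) (j : ℕ) : ℝ := poissonCDF l j * (Nat.factorial j) / l ^ (j+1)
noncomputable def steinR (l : ℝ) (j : ℕ) : ℝ :=
  ∑ m ∈ Finset.range (j+1), (j.descFactorial m : ℝ) / l ^ (m+1)
noncomputable def steinC (l : ℝ) (j : ℕ) : ℝ := poissonTail l (j+1) * (Nat.factorial j) / l ^ (j+1)
noncomputable def steinQ (l : ℝ) (j : ℕ) : ℝ :=
  ∑' m : ℕ, l ^ m * (Nat.factorial j : ℝ) / (Nat.factorial (j+1+m) : ℝ)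

lemma steinD_eq {l : ℝ} (hl : 0 < l) (j : ℕ) :
    steinD l j = Real.exp (-l) * steinR l j := by
  unfold steinD steinR poissonCDF
  rw [Finset.sum_mul, Finset.sum_div,
    ← Finset.sum_range_reflect (fun i => _root_.poissonPMF l i * (j.factorial:ℝ) / l ^ (j+1)),
    Finset.mul_sum]
  refine Finset.sum_congr rfl fun m hm => ?_
  rw [Finset.mem_range] at hm
  have hm' : m ≤ j := by omega
  have h1 : j + 1 - 1 - m = j - m := by omega
  rw [h1]
  have hfac : ((j - m).factorial : ℝ) * (j.descFactorial m : ℝ) = (j.factorial : ℝ) := by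
    exact_mod_cast congrArg Nat.cast (Nat.factorial_mul_descFactorial hm')
  have hpow : l ^ (j+1) = l ^ (j-m) * l ^ (m+1) := by
    rw [← pow_add]; congr 1; omega
  unfold _root_.poissonPMF
  rw [hpow]
  field_simp
  rw [← hfac]

lemma steinR_mono {l : ℝ} (hl : 0 < l) (j : ℕ) : steinR l j ≤ steinR l (j+1) := by
  unfold steinR
  calc ∑ m ∈ Finset.range (j+1), (j.descFactorial m : ℝ) / l ^ (m+1)
      ≤ ∑ m ∈ Finset.range (j+1), ((j+1).descFactorial m : ℝ) / l ^ (m+1) := by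
        refine Finset.sum_le_sum fun m _ => ?_
        have : (j.descFactorial m : ℝ) ≤ ((j+1).descFactorial m : ℝ) := by
          exact_mod_cast descFac_mono j m
        gcongr
    _ ≤ ∑ m ∈ Finset.range (j+2), ((j+1).descFactorial m : ℝ) / l ^ (m+1) := by
        refine Finset.sum_le_sum_of_subset_of_nonneg ?_ fun m _ _ => by positivity
        exact Finset.range_subset_range.2 (by omega)

lemma steinR_convex {l : ℝ} (hl : 0 < l) (j : ℕ) :
    2 * steinR l (j+1) ≤ steinR l j + steinR l (j+2) := by
  unfold steinR
  have ext1 : ∑ m ∈ Finset.range (j+1), (j.descFactorial m : ℝ) / l ^ (m+1)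
      = ∑ m ∈ Finset.range (j+3), (j.descFactorial m : ℝ) / l ^ (m+1) := by
    refine Finset.sum_subset (Finset.range_subset_range.2 (by omega)) fun m _ hm => ?_
    rw [Finset.mem_range, not_lt] at hm
    rw [Nat.descFactorial_of_lt (by omega)]; simp
  have ext2 : ∑ m ∈ Finset.range (j+2), ((j+1).descFactorial m : ℝ) / l ^ (m+1)
      = ∑ m ∈ Finset.range (j+3), ((j+1).descFactorial m : ℝ) / l ^ (m+1) := by
    refine Finset.sum_subset (Finset.range_subset_range.2 (by omega)) fun m _ hm => ?_
    rw [Finset.mem_range, not_lt] at hm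
    rw [Nat.descFactorial_of_lt (by omega)]; simp
  rw [ext1, ext2, Finset.mul_sum, ← Finset.sum_add_distrib]
  refine Finset.sum_le_sum fun m _ => ?_
  rw [← add_div, ← mul_div_assoc]
  apply div_le_div_of_nonneg_right ?_ (by positivity)
  have := descFac_convex j m
  exact_mod_cast (by exact_mod_cast Nat.cast_le.mpr this :
    ((2 * (j+1).descFactorial m : ℕ) : ℝ) ≤ ((j.descFactorial m + (j+2).descFactorial m : ℕ) : ℝ))

lemma steinD_mono {l : ℝ} (hl : 0 < l) (j : ℕ) : steinD l j ≤ steinD l (j+1) := by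
  rw [steinD_eq hl, steinD_eq hl]
  exact mul_le_mul_of_nonneg_left (steinR_mono hl j) (Real.exp_pos _).le

lemma steinD_convex {l : ℝ} (hl : 0 < l) (j : ℕ) :
    steinD l (j+1) - steinD l j ≤ steinD l (j+2) - steinD l (j+1) := by
  rw [steinD_eq hl, steinD_eq hl, steinD_eq hl]
  nlinarith [steinR_convex hl j, Real.exp_pos (-l)]

lemma fact_prod_le {j m : ℕ} : j.factorial * m.factorial ≤ (j+1+m).factorial :=
  calc j.factorial * m.factorial ≤ (j+1).factorial * m.factorial :=
        Nat.mul_le_mul_right _ (Nat.factorial_le (by omega))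
    _ ≤ (j+1+m).factorial := Nat.le_of_dvd (Nat.factorial_pos _)
        (Nat.factorial_mul_factorial_dvd_factorial_add (j+1) m)

lemma steinQ_summable {l : ℝ} (hl : 0 < l) (j : ℕ) :
    Summable (fun m : ℕ => l ^ m * (Nat.factorial j : ℝ) / (Nat.factorial (j+1+m) : ℝ)) := by
  refine Summable.of_nonneg_of_le (fun m => by positivity) (fun m => ?_)
    (Real.summable_pow_div_factorial l)
  have h : (j.factorial : ℝ) * (m.factorial : ℝ) ≤ ((j+1+m).factorial : ℝ) := by
    exact_mod_cast fact_prod_le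
  rw [div_le_div_iff₀ (by positivity) (by positivity), mul_assoc]
  have hp : (0:ℝ) ≤ l ^ m := by positivity
  nlinarith [mul_le_mul_of_nonneg_left h hp]

lemma steinC_eq {l : ℝ} (hl : 0 < l) (j : ℕ) :
    steinC l j = Real.exp (-l) * steinQ l j := by
  unfold steinC steinQ poissonTail
  rw [← tsum_mul_left, ← tsum_mul_right, ← tsum_div_const]
  refine tsum_congr fun m => ?_
  unfold _root_.poissonPMF
  have hpow : l ^ (j+1+m) = l ^ (j+1) * l ^ m := by rw [← pow_add]
  rw [hpow]
  have h1 : (l:ℝ) ^ (j+1) ≠ 0 := by positivity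
  field_simp

lemma steinQ_anti {l : ℝ} (hl : 0 < l) (j : ℕ) : steinQ l (j+1) ≤ steinQ l j := by
  unfold steinQ
  refine Summable.tsum_le_tsum (fun m => ?_) (steinQ_summable hl (j+1)) (steinQ_summable hl j)
  have h2 : j + 2 + m = (j+1+m) + 1 := by omega
  rw [h2]
  have := fact_ratio (j := j) (c := j+1+m) (by omega)
  calc l ^ m * ((j+1).factorial : ℝ) / (((j+1+m)+1).factorial : ℝ)
      = l ^ m * (((j+1).factorial : ℝ) / (((j+1+m)+1).factorial : ℝ)) := by ring
    _ ≤ l ^ m * ((j.factorial : ℝ) / ((j+1+m).factorial : ℝ)) := by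
        apply mul_le_mul_of_nonneg_left this (by positivity)
    _ = l ^ m * (j.factorial : ℝ) / ((j+1+m).factorial : ℝ) := by ring

lemma term_diff {l : ℝ} (j m : ℕ) :
    l ^ m * (j.factorial : ℝ) / ((j+1+m).factorial : ℝ)
      - l ^ m * ((j+1).factorial : ℝ) / ((j+2+m).factorial : ℝ)
    = (m+1) * (l ^ m * (j.factorial : ℝ) / ((j+2+m).factorial : ℝ)) := by
  have e1 : ((j+2+m).factorial : ℝ) = (j+2+m) * ((j+1+m).factorial : ℝ) := by
    rw [show j+2+m = (j+1+m)+1 by omega, Nat.factorial_succ]; push_cast; ring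
  have e2 : (((j+1)).factorial : ℝ) = (j+1) * (j.factorial : ℝ) := by
    rw [Nat.factorial_succ]; push_cast; ring
  rw [e1, e2]
  have h1 : ((j+1+m).factorial : ℝ) ≠ 0 := by positivity
  have h2 : ((j:ℝ)+2+m) ≠ 0 := by positivity
  field_simp
  ring

lemma term_convex {l : ℝ} (hl : 0 < l) (j m : ℕ) :
    2 * (l ^ m * ((j+1).factorial : ℝ) / ((j+1+1+m).factorial : ℝ)) ≤
      l ^ m * (j.factorial : ℝ) / ((j+1+m).factorial : ℝ)
      + l ^ m * ((j+2).factorial : ℝ) / ((j+2+1+m).factorial : ℝ) := by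
  have d1 := term_diff (l := l) j m
  have d2 := term_diff (l := l) (j+1) m
  rw [show j+1+1+m = j+2+m by omega] at d2 ⊢
  rw [show j+1+2+m = j+3+m by omega, show j+1+1 = j+2 by omega] at d2
  rw [show j+2+1+m = j+3+m by omega]
  have hr : ((j+1).factorial : ℝ) / ((j+3+m).factorial : ℝ)
      ≤ (j.factorial : ℝ) / ((j+2+m).factorial : ℝ) := by
    have := fact_ratio (j := j) (c := j+2+m) (by omega)
    rw [show j+2+m+1 = j+3+m by omega] at this
    exact this
  have key : ((m:ℝ)+1) * (l ^ m * (((j+1).factorial : ℝ) / ((j+3+m).factorial : ℝ)))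
      ≤ ((m:ℝ)+1) * (l ^ m * ((j.factorial : ℝ) / ((j+2+m).factorial : ℝ))) := by
    apply mul_le_mul_of_nonneg_left _ (by positivity)
    exact mul_le_mul_of_nonneg_left hr (by positivity)
  simp only [mul_div_assoc] at d1 d2 ⊢
  linarith [d1, d2, key]

lemma steinQ_convex {l : ℝ} (hl : 0 < l) (j : ℕ) :
    2 * steinQ l (j+1) ≤ steinQ l j + steinQ l (j+2) := by
  unfold steinQ
  rw [← tsum_mul_left, ← Summable.tsum_add (steinQ_summable hl j) (steinQ_summable hl (j+2))]
  refine Summable.tsum_le_tsum (fun m => ?_) ((steinQ_summable hl (j+1)).mul_left 2)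
    ((steinQ_summable hl j).add (steinQ_summable hl (j+2)))
  exact term_convex hl j m

lemma steinC_anti {l : ℝ} (hl : 0 < l) (j : ℕ) : steinC l (j+1) ≤ steinC l j := by
  rw [steinC_eq hl, steinC_eq hl]
  exact mul_le_mul_of_nonneg_left (steinQ_anti hl j) (Real.exp_pos _).le

lemma steinC_convex {l : ℝ} (hl : 0 < l) (j : ℕ) :
    steinC l (j+1) - steinC l j ≤ steinC l (j+2) - steinC l (j+1) := by
  rw [steinC_eq hl, steinC_eq hl, steinC_eq hl]
  nlinarith [steinQ_convex hl j, Real.exp_pos (-l)]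

/- ### recurrences and algebraic identities -/

lemma poissonCDF_succ (l : ℝ) (j : ℕ) :
    poissonCDF l (j+1) = poissonCDF l j + _root_.poissonPMF l (j+1) :=
  Finset.sum_range_succ _ _

lemma steinD_rec {l : ℝ} (hl : 0 < l) (j : ℕ) :
    l * steinD l (j+1) = (j+1) * steinD l j + Real.exp (-l) := by
  unfold steinD
  rw [poissonCDF_succ]
  unfold _root_.poissonPMF
  have hfs : (((j+1).factorial : ℕ) : ℝ) = (j+1) * (j.factorial : ℝ) := by
    rw [Nat.factorial_succ]; push_cast; ring
  have h1 : ((j.factorial : ℕ) : ℝ) ≠ 0 := by positivity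
  have h2 : l ≠ 0 := ne_of_gt hl
  rw [hfs]
  field_simp
  ring

lemma steinC_rec {l : ℝ} (hl : 0 < l) (j : ℕ) :
    l * steinC l (j+1) = (j+1) * steinC l j - Real.exp (-l) := by
  unfold steinC
  rw [show (j+1)+1 = j+2 from rfl, poissonTail_succ (l := l) (j+1)]
  unfold _root_.poissonPMF
  have hfs : (((j+1).factorial : ℕ) : ℝ) = (j+1) * (j.factorial : ℝ) := by
    rw [Nat.factorial_succ]; push_cast; ring
  have h1 : ((j.factorial : ℕ) : ℝ) ≠ 0 := by positivity
  have h2 : l ≠ 0 := ne_of_gt hl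
  rw [hfs]
  field_simp
  ring

lemma steinC0_eq {l : ℝ} (hl : 0 < l) (m : ℕ) :
    SteinC0 l (m+2) = Real.exp l * poissonCDF l (m+1) * ((m+1).factorial : ℝ) / l^(m+2) := by
  unfold SteinC0 _root_.poissonPMF
  have h0 : (m+2) - 1 = m+1 := rfl
  rw [h0]
  have hfs : (((m+2).factorial : ℕ) : ℝ) = (m+2) * ((m+1).factorial : ℝ) := by
    rw [Nat.factorial_succ]; push_cast; ring
  have h1 : (((m+1).factorial : ℕ) : ℝ) ≠ 0 := by positivity
  have h2 : l ≠ 0 := ne_of_gt hl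
  have h3 : Real.exp (-l) = (Real.exp l)⁻¹ := by rw [Real.exp_neg]
  rw [hfs, h3]
  have h4 : Real.exp l ≠ 0 := (Real.exp_pos l).ne'
  field_simp
  push_cast
  ring

lemma steinE1 {l : ℝ} (hl : 0 < l) (m : ℕ) :
    SteinC0 l (m+2) *
      (1 - poissonCDF l ((m+2) - 2) * l / ((((((m+2):ℕ)):ℝ) - 1) * poissonCDF l ((m+2) - 1)))
    = Real.exp l * (steinD l (m+1) - steinD l m) := by
  rw [steinC0_eq hl]
  have h0 : (m+2) - 2 = m := rfl
  have h1 : (m+2) - 1 = m+1 := rfl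
  rw [h0, h1]
  unfold steinD
  have hfs : (((m+1).factorial : ℕ) : ℝ) = (m+1) * (m.factorial : ℝ) := by
    rw [Nat.factorial_succ]; push_cast; ring
  have hF : poissonCDF l (m+1) ≠ 0 := (poissonCDF_pos hl _).ne'
  have h2 : l ≠ 0 := ne_of_gt hl
  have h3 : ((m:ℝ)+2) - 1 = (m:ℝ)+1 := by ring
  push_cast
  rw [h3, hfs]
  have h4 : ((m:ℝ)+1) ≠ 0 := by positivity
  have h5 : (m.factorial : ℝ) ≠ 0 := by positivity
  field_simp
  ring

lemma steinE2 {l : ℝ} (hl : 0 < l) (m : ℕ) :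
    SteinC0 l (m+2) * poissonTail l (m+2) *
      (1 - poissonTail l ((m+2) + 1) * (((m+2):ℕ):ℝ) / (poissonTail l (m+2) * l))
    = Real.exp l * poissonCDF l (m+1) * (steinC l (m+1) - steinC l (m+2)) := by
  rw [steinC0_eq hl]
  unfold steinC
  have hfs : (((m+2).factorial : ℕ) : ℝ) = (m+2) * ((m+1).factorial : ℝ) := by
    rw [Nat.factorial_succ]; push_cast; ring
  have hU : poissonTail l (m+2) ≠ 0 := (poissonTail_pos hl _).ne'
  have h2 : l ≠ 0 := ne_of_gt hl
  have h5 : (((m+1).factorial : ℕ) : ℝ) ≠ 0 := by positivity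
  rw [show (m+1)+1 = m+2 from rfl, show (m+2)+1 = m+3 from rfl]
  push_cast
  rw [hfs]
  field_simp
  ring

lemma tie_lemma {l : ℝ} (m : ℕ) :
    poissonTail l (m+2) * steinD l (m+1) = poissonCDF l (m+1) * steinC l (m+1) := by
  unfold steinD steinC
  rw [show (m+1)+1 = m+2 from rfl]
  ring


lemma steinC1_mul {l : ℝ} (hl : 0 < l) (m : ℕ) :
    SteinC1 l (m+2) * poissonTail l (m+2)
      = max (Real.exp l * poissonTail l (m+2) * (steinD l (m+1) - steinD l m))
            (Real.exp l * poissonCDF l (m+1) * (steinC l (m+1) - steinC l (m+2))) := by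
  unfold SteinC1
  set r1 := poissonCDF l ((m+2) - 2) * l /
      ((((((m+2):ℕ)):ℝ) - 1) * poissonCDF l ((m+2) - 1)) with hr1
  set r2 := poissonTail l ((m+2) + 1) * (((m+2):ℕ):ℝ) / (poissonTail l (m+2) * l) with hr2
  have e1 := steinE1 hl m
  rw [← hr1] at e1
  have e2 := steinE2 hl m
  rw [← hr2] at e2
  have hC0pos : 0 < SteinC0 l (m+2) := by
    rw [steinC0_eq hl]
    have h1 := poissonCDF_pos hl (m+1)
    have h2 : (0:ℝ) < ((m+1).factorial : ℝ) := by positivity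
    have h3 : (0:ℝ) < l^(m+2) := by positivity
    have h4 := Real.exp_pos l
    positivity
  have hT := poissonTail_pos hl (m+2)
  have e1T := congrArg (fun x => x * poissonTail l (m+2)) e1
  rcases le_total r1 r2 with h | h
  · rw [min_eq_left h]
    have step := mul_le_mul_of_nonneg_left (sub_le_sub_left h (1:ℝ)) (mul_pos hC0pos hT).le
    have hba : Real.exp l * poissonCDF l (m+1) * (steinC l (m+1) - steinC l (m+2))
        ≤ Real.exp l * poissonTail l (m+2) * (steinD l (m+1) - steinD l m) := by
      nlinarith [step, e1T, e2]
    rw [max_eq_left hba]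
    linear_combination poissonTail l (m+2) * e1
  · rw [min_eq_right h]
    have step := mul_le_mul_of_nonneg_left (sub_le_sub_left h (1:ℝ)) (mul_pos hC0pos hT).le
    have hab : Real.exp l * poissonTail l (m+2) * (steinD l (m+1) - steinD l m)
        ≤ Real.exp l * poissonCDF l (m+1) * (steinC l (m+1) - steinC l (m+2)) := by
      nlinarith [step, e1T, e2]
    rw [max_eq_right hab]
    linear_combination e2

lemma steinC2_mul {l : ℝ} (hl : 0 < l) (m : ℕ) :
    SteinC2 l (m+2) * poissonTail l (m+2)
      = Real.exp l * poissonTail l (m+2) * (steinD l (m+1) - steinD l m)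
        + Real.exp l * poissonCDF l (m+1) * (steinC l (m+1) - steinC l (m+2)) := by
  unfold SteinC2
  have e1 := steinE1 hl m
  have e2 := steinE2 hl m
  linear_combination poissonTail l (m+2) * e1 + e2

/-- Lemma 2 (iv). -/
theorem stein_diff_sup_global (l : ℝ) (hl : 0 < l) (k : ℕ) (hk : 2 ≤ k) (f : ℕ → ℝ)
    (hf : IsSteinSolution l k f) :
    IsGreatest (Set.range fun i : ℕ => |f (i + 1) - f i|) (SteinC1 l k * poissonTail l k) ∧
    IsGreatest (Set.range fun i : ℕ => |(f (i + 2) - f (i + 1)) - (f (i + 1) - f i)|)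
      (SteinC2 l k * poissonTail l k) := by
  obtain ⟨hf0, hrec⟩ := hf
  obtain ⟨m, rfl⟩ : ∃ m, k = m + 2 := ⟨k - 2, by omega⟩
  have hlne : l ≠ 0 := ne_of_gt hl
  have hTpos : 0 < poissonTail l (m+2) := poissonTail_pos hl (m+2)
  have hFpos : 0 < poissonCDF l (m+1) := poissonCDF_pos hl (m+1)
  have hexp : Real.exp l * Real.exp (-l) = 1 := by rw [← Real.exp_add]; simp
  -- the solution formula in the lower regime
  have flow : ∀ j, j ≤ m+1 →
      f (j+1) = -(Real.exp l * poissonTail l (m+2)) * steinD l j := by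
    intro j
    induction j with
    | zero =>
      intro _
      have h := hrec 0
      rw [if_neg (by omega)] at h
      push_cast at h
      have hD0 : steinD l 0 = Real.exp (-l) / l := by
        unfold steinD poissonCDF _root_.poissonPMF
        simp
      rw [hD0]
      have hval : -(Real.exp l * poissonTail l (m+2)) * (Real.exp (-l)/l)
          = -(poissonTail l (m+2))/l := by
        field_simp [hlne]
        linear_combination (-1 : ℝ) * hexp
      rw [hval, eq_div_iff hlne]
      linarith [h]
    | succ j ih =>
      intro hj
      have ihh := ih (by omega)
      have h := hrec (j+1)
      rw [if_neg (by omega)] at h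
      push_cast at h
      have hrecD := steinD_rec hl j
      apply mul_left_cancel₀ hlne
      linear_combination h + ((j:ℝ)+1) * ihh
        + Real.exp l * poissonTail l (m+2) * hrecD
        + poissonTail l (m+2) * hexp
  -- the solution formula in the upper regime
  have fhigh : ∀ j, m+1 ≤ j →
      f (j+1) = -(Real.exp l * poissonCDF l (m+1)) * steinC l j := by
    intro j hj
    induction j, hj using Nat.le_induction with
    | base =>
      rw [flow (m+1) le_rfl]
      linear_combination (-(Real.exp l)) * tie_lemma (l := l) m
    | succ j hj ih =>
      have h := hrec (j+1)
      rw [if_pos (by omega)] at h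
      push_cast at h
      have h1T : poissonCDF l (m+1) + poissonTail l (m+2) = 1 := poissonCDF_add_tail (m+1)
      have hrecC := steinC_rec hl j
      apply mul_left_cancel₀ hlne
      linear_combination h + ((j:ℝ)+1) * ih
        + Real.exp l * poissonCDF l (m+1) * hrecC
        - poissonCDF l (m+1) * hexp - h1T
  -- first differences
  have dzero : f 1 - f 0 = 0 := by rw [hf0, sub_self]
  have dlow : ∀ j, j ≤ m → f (j+2) - f (j+1) =
      -(Real.exp l * poissonTail l (m+2) * (steinD l (j+1) - steinD l j)) := by
    intro j hj
    rw [flow (j+1) (by omega), flow j (by omega)]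
    ring
  have dhigh : ∀ j, m+1 ≤ j → f (j+2) - f (j+1) =
      Real.exp l * poissonCDF l (m+1) * (steinC l j - steinC l (j+1)) := by
    intro j hj
    rw [fhigh (j+1) (by omega), fhigh j hj]
    ring
  -- monotonicity facts
  have hdD : Monotone (fun j => steinD l (j+1) - steinD l j) :=
    monotone_nat_of_le_succ (fun j => steinD_convex hl j)
  have hdC : Monotone (fun j => steinC l (j+1) - steinC l j) :=
    monotone_nat_of_le_succ (fun j => steinC_convex hl j)
  have hdD0 : ∀ j, 0 ≤ steinD l (j+1) - steinD l j := fun j => sub_nonneg.2 (steinD_mono hl j)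
  have hdC0 : ∀ j, 0 ≤ steinC l j - steinC l (j+1) := fun j => sub_nonneg.2 (steinC_anti hl j)
  set M1a := Real.exp l * poissonTail l (m+2) * (steinD l (m+1) - steinD l m) with hM1a
  set M1b := Real.exp l * poissonCDF l (m+1) * (steinC l (m+1) - steinC l (m+2)) with hM1b
  have hM1a0 : 0 ≤ M1a := by
    rw [hM1a]; exact mul_nonneg (by positivity) (hdD0 m)
  have hM1b0 : 0 ≤ M1b := by
    rw [hM1b]; exact mul_nonneg (by positivity) (hdC0 (m+1))
  -- bounds in the lower regime
  have hAle : ∀ i, i ≤ m →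
      Real.exp l * poissonTail l (m+2) * (steinD l (i+1) - steinD l i) ≤ M1a := by
    intro i hi
    rw [hM1a]
    exact mul_le_mul_of_nonneg_left (hdD hi) (by positivity)
  have hBle : ∀ j, m+1 ≤ j →
      Real.exp l * poissonCDF l (m+1) * (steinC l j - steinC l (j+1)) ≤ M1b := by
    intro j hj
    rw [hM1b]
    apply mul_le_mul_of_nonneg_left _ (by positivity)
    have := hdC hj
    simp only at this
    linarith
  -- interval bounds for first differences
  have hdf_low : ∀ i, i ≤ m → f (i+1) - f i ≤ 0 ∧
      -(Real.exp l * poissonTail l (m+2) * (steinD l (i+1) - steinD l i)) ≤ f (i+1) - f i := by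
    intro i hi
    match i, hi with
    | 0, hi =>
      rw [dzero]
      refine ⟨le_refl 0, ?_⟩
      have := mul_nonneg (mul_pos (Real.exp_pos l) hTpos).le (hdD0 0)
      linarith
    | (j+1), hi =>
      rw [dlow j (by omega)]
      have h1 := mul_nonneg (mul_pos (Real.exp_pos l) hTpos).le (hdD0 j)
      have h2 : Real.exp l * poissonTail l (m+2) * (steinD l (j+1) - steinD l j)
          ≤ Real.exp l * poissonTail l (m+2) * (steinD l (j+1+1) - steinD l (j+1)) :=
        mul_le_mul_of_nonneg_left (hdD (Nat.le_succ j)) (by positivity)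
      constructor
      · linarith
      · linarith
  -- peak values
  have hpeak : f (m+2) - f (m+1) = -M1a := by
    rw [dlow m le_rfl, hM1a]
  have hpeak2 : f (m+3) - f (m+2) = M1b := by
    have h := dhigh (m+1) le_rfl
    rw [hM1b]
    exact h
  -- upper bound for first differences
  have habs : ∀ i : ℕ, |f (i+1) - f i| ≤ max M1a M1b := by
    intro i
    rcases le_or_gt i m with hi | hi
    · obtain ⟨h1, h2⟩ := hdf_low i hi
      have h3 := hAle i hi
      rw [abs_le]
      have h4 : M1a ≤ max M1a M1b := le_max_left _ _
      have h5 : (0:ℝ) ≤ max M1a M1b := le_trans hM1a0 h4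
      exact ⟨by linarith, by linarith⟩
    · rcases eq_or_lt_of_le (Nat.succ_le_of_lt hi) with heq | hi'
      · obtain rfl : i = m + 1 := by omega
        show |f (m+2) - f (m+1)| ≤ max M1a M1b
        rw [hpeak, abs_neg, abs_of_nonneg hM1a0]
        exact le_max_left _ _
      · obtain ⟨j, rfl⟩ : ∃ j, i = j + 1 := ⟨i - 1, by omega⟩
        have hj : m + 1 ≤ j := by omega
        show |f (j+2) - f (j+1)| ≤ max M1a M1b
        rw [dhigh j hj, abs_of_nonneg (mul_nonneg (by positivity) (hdC0 j))]
        exact le_trans (hBle j hj) (le_max_right _ _)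
  -- upper bound for second differences
  have habs2 : ∀ i : ℕ, |(f (i+2) - f (i+1)) - (f (i+1) - f i)| ≤ M1a + M1b := by
    intro i
    rcases le_or_gt i m with hi | hi
    · have h2 := dlow i hi
      obtain ⟨hy1, hy2⟩ := hdf_low i hi
      have h3 := hAle i hi
      have h1nn : 0 ≤ Real.exp l * poissonTail l (m+2) * (steinD l (i+1) - steinD l i) :=
        mul_nonneg (by positivity) (hdD0 i)
      rw [h2, abs_le]
      exact ⟨by linarith, by linarith⟩
    · rcases eq_or_lt_of_le (Nat.succ_le_of_lt hi) with heq | hi'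
      · obtain rfl : i = m + 1 := by omega
        show |(f (m+3) - f (m+2)) - (f (m+2) - f (m+1))| ≤ M1a + M1b
        rw [hpeak2, hpeak, sub_neg_eq_add, abs_of_nonneg (by linarith)]
        linarith
      · obtain ⟨j, rfl⟩ : ∃ j, i = j + 1 := ⟨i - 1, by omega⟩
        have hj : m + 1 ≤ j := by omega
        show |(f (j+3) - f (j+2)) - (f (j+2) - f (j+1))| ≤ M1a + M1b
        have ha : f (j+2) - f (j+1)
            = Real.exp l * poissonCDF l (m+1) * (steinC l j - steinC l (j+1)) := dhigh j hj
        have hb : f (j+3) - f (j+2)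
            = Real.exp l * poissonCDF l (m+1) * (steinC l (j+1) - steinC l (j+2)) :=
          dhigh (j+1) (by omega)
        have hmono := hdC (Nat.le_succ j)
        simp only [] at hmono
        have hnn1 : 0 ≤ Real.exp l * poissonCDF l (m+1) * (steinC l (j+1) - steinC l (j+2)) :=
          mul_nonneg (by positivity) (hdC0 (j+1))
        have hle1 := hBle j hj
        have hmul : Real.exp l * poissonCDF l (m+1) * (steinC l (j+1) - steinC l (j+2))
            ≤ Real.exp l * poissonCDF l (m+1) * (steinC l j - steinC l (j+1)) := by
          apply mul_le_mul_of_nonneg_left _ (by positivity)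
          linarith
        rw [ha, hb, abs_le]
        exact ⟨by linarith, by linarith⟩
  -- conclusion
  constructor
  · constructor
    · rw [steinC1_mul hl m, ← hM1a, ← hM1b]
      rcases le_total M1b M1a with h | h
      · refine ⟨m+1, ?_⟩
        show |f (m+2) - f (m+1)| = max M1a M1b
        rw [max_eq_left h, hpeak, abs_neg, abs_of_nonneg hM1a0]
      · refine ⟨m+2, ?_⟩
        show |f (m+3) - f (m+2)| = max M1a M1b
        rw [max_eq_right h, hpeak2, abs_of_nonneg hM1b0]
    · rw [steinC1_mul hl m, ← hM1a, ← hM1b]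
      rintro x ⟨i, rfl⟩
      exact habs i
  · constructor
    · rw [steinC2_mul hl m, ← hM1a, ← hM1b]
      refine ⟨m+1, ?_⟩
      show |(f (m+3) - f (m+2)) - (f (m+2) - f (m+1))| = M1a + M1b
      rw [hpeak2, hpeak, sub_neg_eq_add, abs_of_nonneg (by linarith), add_comm]
    · rw [steinC2_mul hl m, ← hM1a, ← hM1b]
      rintro x ⟨i, rfl⟩
      exact habs2 i
end
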